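/- arXiv:1505.04683 — 8 statements merged into one kernel-verified Lean document; each statement's English description precedes it below -/
import Mathlib

section
/- For every complex number z, e^{−z²} = (1/√π) · ∫₀^∞ exp(−t²/4) · cos(z·t) dt, where the integral is over t ∈ (0, ∞) and cos denotes the complex cosine. -/
open Real MeasureTheory

lemma gauss_fourier_quarter (w : ℂ) :
    ∫ x : ℝ, Complex.exp (Complex.I * w * x) * Complex.exp (-(1/4 : ℂ) * x ^ 2) =
      2 * (Real.sqrt π : ℂ) * Complex.exp (-w ^ 2) := by
  have hb : 0 < (1/4 : ℂ).re := by norm_num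
  have h := fourierIntegral_gaussian hb w
  rw [h]
  have h4 : ((π : ℂ) / (1/4 : ℂ)) = ((4 * π : ℝ) : ℂ) := by
    push_cast; ring
  have hpow : ((4*π:ℝ):ℂ) ^ (1/2 : ℂ) = ((2 * Real.sqrt π : ℝ) : ℂ) := by
    rw [show (1/2:ℂ) = ((1/2:ℝ):ℂ) by norm_num, ← Complex.ofReal_cpow (by positivity)]
    congr 1
    rw [← Real.sqrt_eq_rpow, show (4 * π : ℝ) = 2 ^ 2 * π by ring,
      Real.sqrt_mul (by positivity), Real.sqrt_sq (by norm_num)]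
  rw [h4, hpow, show (4 * (1/4 : ℂ)) = 1 by norm_num, div_one]
  push_cast
  ring

lemma gauss_integrable_quarter (w : ℂ) :
    Integrable (fun x : ℝ => Complex.exp (Complex.I * w * x) * Complex.exp (-(1/4 : ℂ) * x ^ 2)) := by
  have hb : 0 < (1/4 : ℂ).re := by norm_num
  refine (integrable_cexp_quadratic hb (Complex.I * w) 0).congr ?_
  filter_upwards with x
  rw [← Complex.exp_add]
  ring_nf

theorem exp_neg_sq_eq_integral_cos (z : ℂ) :
    Complex.exp (-z ^ 2) =
      (1 / (Real.sqrt π : ℂ)) *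
        ∫ t in Set.Ioi (0:ℝ), Complex.exp (-(t : ℂ) ^ 2 / 4) * Complex.cos (z * (t : ℂ)) := by
  set f : ℝ → ℂ := fun t => Complex.exp (-(t : ℂ) ^ 2 / 4) * Complex.cos (z * (t : ℂ)) with hf_def
  have hpt : ∀ x : ℝ, f x = (1/2 : ℂ) *
      (Complex.exp (Complex.I * z * x) * Complex.exp (-(1/4 : ℂ) * x ^ 2) +
       Complex.exp (Complex.I * (-z) * x) * Complex.exp (-(1/4 : ℂ) * x ^ 2)) := by
    intro x
    simp only [hf_def, Complex.cos, ← Complex.exp_add]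
    ring_nf
    rw [Complex.exp_add, Complex.exp_add]
    ring
  have hfi : Integrable f := by
    refine (((gauss_integrable_quarter z).add (gauss_integrable_quarter (-z))).const_mul
      (1/2 : ℂ)).congr ?_
    filter_upwards with x
    exact (hpt x).symm
  have hzsq : (-z) ^ 2 = z ^ 2 := by ring
  have hint : ∫ x : ℝ, f x = 2 * (Real.sqrt π : ℂ) * Complex.exp (-z ^ 2) := by
    calc ∫ x : ℝ, f x
        = ∫ x : ℝ, (1/2 : ℂ) *
            (Complex.exp (Complex.I * z * x) * Complex.exp (-(1/4 : ℂ) * x ^ 2) +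
             Complex.exp (Complex.I * (-z) * x) * Complex.exp (-(1/4 : ℂ) * x ^ 2)) := by
          exact integral_congr_ae (Filter.Eventually.of_forall hpt)
      _ = (1/2 : ℂ) * ((∫ x : ℝ, Complex.exp (Complex.I * z * x) * Complex.exp (-(1/4:ℂ) * x ^ 2))
            + ∫ x : ℝ, Complex.exp (Complex.I * (-z) * x) * Complex.exp (-(1/4:ℂ) * x ^ 2)) := by
          rw [integral_const_mul, integral_add (gauss_integrable_quarter z)
            (gauss_integrable_quarter (-z))]
      _ = 2 * (Real.sqrt π : ℂ) * Complex.exp (-z ^ 2) := by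
          rw [gauss_fourier_quarter z, gauss_fourier_quarter (-z), hzsq]; ring
  have heven : ∀ x : ℝ, f (-x) = f x := by
    intro x
    simp only [hf_def]
    push_cast
    rw [mul_neg, Complex.cos_neg, neg_sq]
  have hsplit : ∫ x : ℝ, f x = 2 * ∫ t in Set.Ioi (0:ℝ), f t := by
    rw [← intervalIntegral.integral_Iic_add_Ioi (b := (0:ℝ)) hfi.integrableOn hfi.integrableOn]
    have : ∫ x in Set.Iic (0:ℝ), f x = ∫ t in Set.Ioi (0:ℝ), f t := by
      rw [show (0:ℝ) = -0 by norm_num, ← integral_comp_neg_Ioi]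
      rw [neg_zero]
      exact setIntegral_congr_fun measurableSet_Ioi fun x _ => heven x
    rw [this]; ring
  have hI : ∫ t in Set.Ioi (0:ℝ), f t = (Real.sqrt π : ℂ) * Complex.exp (-z ^ 2) := by
    have h2 : (2 : ℂ) * ∫ t in Set.Ioi (0:ℝ), f t
        = 2 * ((Real.sqrt π : ℂ) * Complex.exp (-z ^ 2)) := by
      rw [← hsplit, hint]; ring
    exact mul_left_cancel₀ (by norm_num) h2
  have hs : (Real.sqrt π : ℂ) ≠ 0 := by
    exact_mod_cast Real.sqrt_ne_zero'.mpr Real.pi_pos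
  rw [hI]
  field_simp
end

section
/- For every complex number z, the Dawson integral satisfies F(z) = (1/2) · ∫₀^∞ exp(−t²/4) · sin(z·t) dt, where the integral is over t ∈ (0, ∞) and sin denotes the complex sine. -/
open Real MeasureTheory Set Filter Metric

namespace DawsonProofAux

lemma norm_cexp_le (u : ℂ) : ‖Complex.exp u‖ ≤ Real.exp ‖u‖ := by
  rw [Complex.norm_exp]
  exact Real.exp_le_exp.2 (Complex.re_le_norm u)

lemma norm_sin_le (w : ℂ) : ‖Complex.sin w‖ ≤ Real.exp ‖w‖ := by
  rw [Complex.sin]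
  have h1 := norm_cexp_le (-w * Complex.I)
  have h2 := norm_cexp_le (w * Complex.I)
  simp only [norm_mul, norm_neg, Complex.norm_I, mul_one] at h1 h2
  calc ‖(Complex.exp (-w * Complex.I) - Complex.exp (w * Complex.I)) * Complex.I / 2‖
      = ‖Complex.exp (-w * Complex.I) - Complex.exp (w * Complex.I)‖ * 1 / 2 := by
        rw [norm_div, norm_mul, Complex.norm_I]; norm_num
    _ ≤ (Real.exp ‖w‖ + Real.exp ‖w‖) * 1 / 2 := by
        have := (norm_sub_le (Complex.exp (-w * Complex.I)) (Complex.exp (w * Complex.I))).trans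
          (add_le_add h1 h2)
        · gcongr
    _ = Real.exp ‖w‖ := by ring

lemma norm_cos_le (w : ℂ) : ‖Complex.cos w‖ ≤ Real.exp ‖w‖ := by
  rw [Complex.cos]
  have h1 := norm_cexp_le (-w * Complex.I)
  have h2 := norm_cexp_le (w * Complex.I)
  simp only [norm_mul, norm_neg, Complex.norm_I, mul_one] at h1 h2
  calc ‖(Complex.exp (w * Complex.I) + Complex.exp (-w * Complex.I)) / 2‖
      = ‖Complex.exp (w * Complex.I) + Complex.exp (-w * Complex.I)‖ / 2 := by
        rw [norm_div]; norm_num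
    _ ≤ (Real.exp ‖w‖ + Real.exp ‖w‖) / 2 := by
        gcongr
        exact (norm_add_le _ _).trans (add_le_add h2 h1)
    _ = Real.exp ‖w‖ := by ring



noncomputable def sI (z : ℂ) (t : ℝ) : ℂ :=
  Complex.exp (-(t : ℂ) ^ 2 / 4) * Complex.sin (z * (t : ℂ))

noncomputable def cI (z : ℂ) (t : ℝ) : ℂ :=
  Complex.exp (-(t : ℂ) ^ 2 / 4) * ((t : ℂ) * Complex.cos (z * (t : ℂ)))

lemma norm_cexp_q (t : ℝ) : ‖Complex.exp (-(t : ℂ) ^ 2 / 4)‖ = Real.exp (-t ^ 2 / 4) := by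
  rw [Complex.norm_exp]
  norm_num [Complex.div_re, Complex.normSq, ← Complex.ofReal_pow]

lemma exp_bound {c t : ℝ} (hc : 0 ≤ c) (ht : 0 ≤ t) :
    Real.exp (-t ^ 2 / 4) * Real.exp (c * t) ≤ Real.exp (2 * c ^ 2) * Real.exp (-(1/8) * t ^ 2) := by
  rw [← Real.exp_add, ← Real.exp_add]
  apply Real.exp_le_exp.2
  nlinarith [sq_nonneg (t - 4 * c)]

lemma norm_sI_le {c : ℝ} {z : ℂ} (hz : ‖z‖ ≤ c) {t : ℝ} (ht : 0 ≤ t) :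
    ‖sI z t‖ ≤ Real.exp (2 * c ^ 2) * Real.exp (-(1/8) * t ^ 2) := by
  have hc : 0 ≤ c := (norm_nonneg z).trans hz
  have h1 : ‖Complex.sin (z * (t : ℂ))‖ ≤ Real.exp (c * t) := by
    refine (norm_sin_le _).trans (Real.exp_le_exp.2 ?_)
    rw [norm_mul, Complex.norm_real, Real.norm_of_nonneg ht]
    exact mul_le_mul_of_nonneg_right hz ht
  calc ‖sI z t‖ = Real.exp (-t ^ 2 / 4) * ‖Complex.sin (z * (t : ℂ))‖ := by
        rw [sI, norm_mul, norm_cexp_q]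
    _ ≤ Real.exp (-t ^ 2 / 4) * Real.exp (c * t) := by gcongr
    _ ≤ _ := exp_bound hc ht

lemma norm_cI_le {c : ℝ} {z : ℂ} (hz : ‖z‖ ≤ c) {t : ℝ} (ht : 0 ≤ t) :
    ‖cI z t‖ ≤ Real.exp (2 * c ^ 2) * (t * Real.exp (-(1/8) * t ^ 2)) := by
  have hc : 0 ≤ c := (norm_nonneg z).trans hz
  have h1 : ‖Complex.cos (z * (t : ℂ))‖ ≤ Real.exp (c * t) := by
    refine (norm_cos_le _).trans (Real.exp_le_exp.2 ?_)
    rw [norm_mul, Complex.norm_real, Real.norm_of_nonneg ht]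
    exact mul_le_mul_of_nonneg_right hz ht
  calc ‖cI z t‖ = Real.exp (-t ^ 2 / 4) * (t * ‖Complex.cos (z * (t : ℂ))‖) := by
        rw [cI, norm_mul, norm_mul, norm_cexp_q, Complex.norm_real, Real.norm_of_nonneg ht]
    _ ≤ Real.exp (-t ^ 2 / 4) * (t * Real.exp (c * t)) := by gcongr
    _ = t * (Real.exp (-t ^ 2 / 4) * Real.exp (c * t)) := by ring
    _ ≤ t * (Real.exp (2 * c ^ 2) * Real.exp (-(1/8) * t ^ 2)) :=
        mul_le_mul_of_nonneg_left (exp_bound hc ht) ht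
    _ = _ := by ring

lemma sBound_int (c : ℝ) :
    IntegrableOn (fun t : ℝ => Real.exp (2 * c ^ 2) * Real.exp (-(1/8) * t ^ 2)) (Ioi 0) :=
  ((integrable_exp_neg_mul_sq (by norm_num : (0:ℝ) < 1/8)).const_mul _).integrableOn

lemma cBound_int (c : ℝ) :
    IntegrableOn (fun t : ℝ => Real.exp (2 * c ^ 2) * (t * Real.exp (-(1/8) * t ^ 2))) (Ioi 0) :=
  ((integrable_mul_exp_neg_mul_sq (by norm_num : (0:ℝ) < 1/8)).const_mul _).integrableOn

lemma sI_cont (z : ℂ) : Continuous (sI z) := by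
  unfold sI; fun_prop

lemma cI_cont (z : ℂ) : Continuous (cI z) := by
  unfold cI; fun_prop

lemma sI_int (z : ℂ) : IntegrableOn (sI z) (Ioi 0) := by
  refine (sBound_int ‖z‖).mono' (sI_cont z).aestronglyMeasurable ?_
  filter_upwards [self_mem_ae_restrict measurableSet_Ioi] with t ht
  exact norm_sI_le le_rfl (le_of_lt ht)

lemma cI_int (z : ℂ) : IntegrableOn (cI z) (Ioi 0) := by
  refine (cBound_int ‖z‖).mono' (cI_cont z).aestronglyMeasurable ?_
  filter_upwards [self_mem_ae_restrict measurableSet_Ioi] with t ht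
  exact norm_cI_le le_rfl (le_of_lt ht)

lemma hasDerivAt_sI (t : ℝ) (z : ℂ) :
    HasDerivAt (fun z => sI z t) (cI z t) z := by
  have h : HasDerivAt (fun z : ℂ => Complex.sin (z * (t : ℂ)))
      (Complex.cos (z * (t : ℂ)) * (1 * (t : ℂ))) z := by
    have := (Complex.hasDerivAt_sin (z * (t : ℂ))).comp z ((hasDerivAt_id z).mul_const (t : ℂ)); exact this
  have h2 := h.const_mul (Complex.exp (-(t : ℂ) ^ 2 / 4))
  refine h2.congr_deriv ?_
  unfold cI; ring

lemma I_deriv (z₀ : ℂ) :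
    HasDerivAt (fun z => ∫ t in Ioi (0:ℝ), sI z t) (∫ t in Ioi (0:ℝ), cI z₀ t) z₀ := by
  have key := hasDerivAt_integral_of_dominated_loc_of_deriv_le (μ := volume.restrict (Ioi 0))
    (F := fun z t => sI z t) (F' := fun z t => cI z t) (x₀ := z₀)
    (bound := fun t => Real.exp (2 * (‖z₀‖ + 1) ^ 2) * (t * Real.exp (-(1/8) * t ^ 2)))
    (ball_mem_nhds z₀ zero_lt_one)
    (Eventually.of_forall fun z => (sI_cont z).aestronglyMeasurable)
    (sI_int z₀)
    (cI_cont z₀).aestronglyMeasurable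
    ?_ (cBound_int _) ?_
  · exact key.2
  · filter_upwards [self_mem_ae_restrict measurableSet_Ioi] with t ht z hz
    have hzc : ‖z‖ ≤ ‖z₀‖ + 1 := by
      have h1 : ‖z - z₀‖ < 1 := mem_ball_iff_norm.mp hz
      have h2 := norm_sub_norm_le z z₀
      linarith
    exact norm_cI_le hzc (le_of_lt ht)
  · filter_upwards with t z _
    exact hasDerivAt_sI t z

lemma I_parts (z : ℂ) :
    ∫ t in Ioi (0:ℝ), cI z t = 2 - 2 * z * ∫ t in Ioi (0:ℝ), sI z t := by
  have hderiv : ∀ t ∈ Ioi (0:ℝ), HasDerivAt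
      (fun t : ℝ => -2 * (Complex.exp (-(t:ℂ) ^ 2 / 4) * Complex.cos (z * (t : ℂ))))
      (cI z t + (2 * z) * sI z t) t := by
    intro t _
    have h1 : HasDerivAt (fun u : ℂ => Complex.exp (-u ^ 2 / 4))
        (Complex.exp (-(t:ℂ) ^ 2 / 4) * (-((2:ℕ) * (t:ℂ) ^ 1) / 4)) (t : ℂ) :=
      (Complex.hasDerivAt_exp _).comp ((t:ℝ):ℂ) (((hasDerivAt_pow 2 ((t:ℝ):ℂ)).neg).div_const 4)
    have h2 : HasDerivAt (fun u : ℂ => Complex.cos (z * u))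
        (-Complex.sin (z * (t:ℂ)) * (z * 1)) (t : ℂ) :=
      (Complex.hasDerivAt_cos (z * (t:ℂ))).comp ((t:ℝ):ℂ) ((hasDerivAt_id ((t:ℝ):ℂ)).const_mul z)
    have h3 := ((h1.mul h2).const_mul (-2 : ℂ)).comp_ofReal
    refine h3.congr_deriv ?_
    unfold cI sI; push_cast; ring
  have hint : IntegrableOn (fun t : ℝ => cI z t + (2 * z) * sI z t) (Ioi 0) :=
    (cI_int z).add ((sI_int z).const_mul (2 * z))
  have htend : Tendsto (fun t : ℝ => -2 * (Complex.exp (-(t:ℂ) ^ 2 / 4) * Complex.cos (z * (t : ℂ))))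
      atTop (nhds (0:ℂ)) := by
    apply squeeze_zero_norm' (a := fun t : ℝ => (2 * Real.exp (2 * ‖z‖ ^ 2)) * Real.exp (-(1/8) * t ^ 2))
    · filter_upwards [eventually_ge_atTop (0:ℝ)] with t ht
      have hb : ‖Complex.exp (-(t:ℂ) ^ 2 / 4) * Complex.cos (z * (t : ℂ))‖
          ≤ Real.exp (2 * ‖z‖ ^ 2) * Real.exp (-(1/8) * t ^ 2) := by
        have h1 : ‖Complex.cos (z * (t : ℂ))‖ ≤ Real.exp (‖z‖ * t) := by
          refine (norm_cos_le _).trans (Real.exp_le_exp.2 ?_)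
          rw [norm_mul, Complex.norm_real, Real.norm_of_nonneg ht]
        calc ‖Complex.exp (-(t:ℂ) ^ 2 / 4) * Complex.cos (z * (t : ℂ))‖
            = Real.exp (-t ^ 2 / 4) * ‖Complex.cos (z * (t : ℂ))‖ := by
              rw [norm_mul, norm_cexp_q]
          _ ≤ Real.exp (-t ^ 2 / 4) * Real.exp (‖z‖ * t) := by gcongr
          _ ≤ _ := exp_bound (norm_nonneg z) ht
      calc ‖(-2 : ℂ) * (Complex.exp (-(t:ℂ) ^ 2 / 4) * Complex.cos (z * (t : ℂ)))‖
          = 2 * ‖Complex.exp (-(t:ℂ) ^ 2 / 4) * Complex.cos (z * (t : ℂ))‖ := by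
            rw [norm_mul]; norm_num
        _ ≤ 2 * (Real.exp (2 * ‖z‖ ^ 2) * Real.exp (-(1/8) * t ^ 2)) := by gcongr
        _ = _ := by ring
    · have h2 : Tendsto (fun t : ℝ => -(1/8) * t ^ 2) atTop atBot := by
        apply Tendsto.const_mul_atTop_of_neg (by norm_num : -(1/8 : ℝ) < 0)
        exact tendsto_pow_atTop two_ne_zero
      have := (Real.tendsto_exp_atBot.comp h2).const_mul (2 * Real.exp (2 * ‖z‖ ^ 2))
      simpa using this
  have key := integral_Ioi_of_hasDerivAt_of_tendsto
      (by apply Continuous.continuousWithinAt; fun_prop) hderiv hint htend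
  simp only [Complex.ofReal_zero, ne_eq, OfNat.ofNat_ne_zero, not_false_eq_true, zero_pow,
    neg_zero, zero_div, Complex.exp_zero, mul_zero, Complex.cos_zero, mul_one] at key
  rw [integral_add (cI_int z) ((sI_int z).const_mul (2 * z)),
    integral_const_mul] at key
  linear_combination key

lemma h_inner_deriv (z₀ : ℂ) :
    HasDerivAt (fun z : ℂ => ∫ s in (0:ℝ)..1, Complex.exp (((s:ℂ) * z) ^ 2))
      (∫ s in (0:ℝ)..1, 2 * (s:ℂ) ^ 2 * z₀ * Complex.exp (((s:ℂ) * z₀) ^ 2)) z₀ := by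
  have hcont : ∀ z : ℂ, Continuous fun s : ℝ => Complex.exp (((s:ℂ) * z) ^ 2) := by
    intro z; fun_prop
  have hcont' : Continuous fun s : ℝ => 2 * (s:ℂ) ^ 2 * z₀ * Complex.exp (((s:ℂ) * z₀) ^ 2) := by
    fun_prop
  have key := intervalIntegral.hasDerivAt_integral_of_dominated_loc_of_deriv_le
    (μ := volume) (a := (0:ℝ)) (b := (1:ℝ)) (x₀ := z₀)
    (F := fun (z : ℂ) (s : ℝ) => Complex.exp (((s:ℂ) * z) ^ 2))
    (F' := fun (z : ℂ) (s : ℝ) => 2 * (s:ℂ) ^ 2 * z * Complex.exp (((s:ℂ) * z) ^ 2))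
    (bound := fun _ => 2 * (‖z₀‖ + 1) * Real.exp ((‖z₀‖ + 1) ^ 2))
    (ball_mem_nhds z₀ zero_lt_one)
    (Eventually.of_forall fun z => (hcont z).aestronglyMeasurable)
    ((hcont z₀).intervalIntegrable _ _)
    hcont'.aestronglyMeasurable
    ?_ (intervalIntegrable_const) ?_
  · exact key.2
  · filter_upwards with s hs z hz
    rw [Set.uIoc_of_le (by norm_num : (0:ℝ) ≤ 1)] at hs
    have hs0 : 0 < s := hs.1
    have hs1 : s ≤ 1 := hs.2
    have hzc : ‖z‖ ≤ ‖z₀‖ + 1 := by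
      have h1 : ‖z - z₀‖ < 1 := mem_ball_iff_norm.mp hz
      have h2 := norm_sub_norm_le z z₀
      linarith
    have hc0 : (0:ℝ) ≤ ‖z₀‖ + 1 := by positivity
    have hnorm : ‖((s:ℂ) * z) ^ 2‖ = (s * ‖z‖) ^ 2 := by
      rw [norm_pow, norm_mul, Complex.norm_real, Real.norm_of_nonneg hs0.le]
    calc ‖2 * (s:ℂ) ^ 2 * z * Complex.exp (((s:ℂ) * z) ^ 2)‖
        = 2 * s ^ 2 * ‖z‖ * ‖Complex.exp (((s:ℂ) * z) ^ 2)‖ := by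
          rw [norm_mul, norm_mul, norm_mul, norm_pow, Complex.norm_real,
            Real.norm_of_nonneg hs0.le]
          norm_num
      _ ≤ 2 * 1 ^ 2 * (‖z₀‖ + 1) * Real.exp ((‖z₀‖ + 1) ^ 2) := by
          have hexp : ‖Complex.exp (((s:ℂ) * z) ^ 2)‖ ≤ Real.exp ((‖z₀‖ + 1) ^ 2) := by
            refine (norm_cexp_le _).trans (Real.exp_le_exp.2 ?_)
            rw [hnorm]
            have hmm : s * ‖z‖ ≤ 1 * (‖z₀‖ + 1) :=
              mul_le_mul hs1 hzc (norm_nonneg z) (by norm_num)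
            calc (s * ‖z‖) ^ 2 ≤ (1 * (‖z₀‖ + 1)) ^ 2 := by
                  apply pow_le_pow_left₀ (by positivity) hmm
              _ = (‖z₀‖ + 1) ^ 2 := by ring
          gcongr
      _ = 2 * (‖z₀‖ + 1) * Real.exp ((‖z₀‖ + 1) ^ 2) := by ring
  · filter_upwards with s hs z hz
    have h0 : HasDerivAt (fun z : ℂ => ((s:ℂ) * z) ^ 2)
        ((2:ℕ) * ((s:ℂ) * z) ^ 1 * ((s:ℂ) * 1)) z :=
      (hasDerivAt_pow 2 ((s:ℂ) * z)).comp z ((hasDerivAt_id z).const_mul (s:ℂ))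
    have := (Complex.hasDerivAt_exp _).comp z h0
    refine this.congr_deriv ?_
    push_cast; ring

lemma D_deriv (z₀ : ℂ) :
    HasDerivAt (fun z : ℂ => z * ∫ s in (0:ℝ)..1, Complex.exp (((s:ℂ) * z) ^ 2))
      (Complex.exp (z₀ ^ 2)) z₀ := by
  have h := (hasDerivAt_id z₀).mul (h_inner_deriv z₀)
  refine h.congr_deriv ?_
  have hderiv : ∀ s ∈ Set.uIcc (0:ℝ) 1, HasDerivAt
      (fun s : ℝ => (s:ℂ) * Complex.exp (((s:ℂ) * z₀) ^ 2))
      (Complex.exp (((s:ℂ) * z₀) ^ 2)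
        + 2 * (s:ℂ) ^ 2 * z₀ ^ 2 * Complex.exp (((s:ℂ) * z₀) ^ 2)) s := by
      intro s _
      have hG : HasDerivAt (fun u : ℂ => u * Complex.exp ((u * z₀) ^ 2))
          (1 * Complex.exp (((s:ℂ) * z₀) ^ 2) +
            (s:ℂ) * (Complex.exp (((s:ℂ) * z₀) ^ 2) * ((2:ℕ) * ((s:ℂ) * z₀) ^ 1 * (1 * z₀)))) (s:ℂ) := by
        have := (hasDerivAt_id ((s:ℝ):ℂ)).mul
          ((Complex.hasDerivAt_exp _).comp ((s:ℝ):ℂ)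
            ((hasDerivAt_pow 2 (((s:ℝ):ℂ) * z₀)).comp ((s:ℝ):ℂ)
              ((hasDerivAt_id ((s:ℝ):ℂ)).mul_const z₀)))
        exact this
      have := hG.comp_ofReal
      convert this using 1
      push_cast; ring
  have ftc := intervalIntegral.integral_eq_sub_of_hasDerivAt hderiv
    (by apply Continuous.intervalIntegrable; fun_prop)
  have hsplit : ∫ s in (0:ℝ)..1,
      (Complex.exp (((s:ℂ) * z₀) ^ 2) + 2 * (s:ℂ) ^ 2 * z₀ ^ 2 * Complex.exp (((s:ℂ) * z₀) ^ 2))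
      = (∫ s in (0:ℝ)..1, Complex.exp (((s:ℂ) * z₀) ^ 2))
        + ∫ s in (0:ℝ)..1, 2 * (s:ℂ) ^ 2 * z₀ ^ 2 * Complex.exp (((s:ℂ) * z₀) ^ 2) := by
    apply intervalIntegral.integral_add
    · apply Continuous.intervalIntegrable; fun_prop
    · apply Continuous.intervalIntegrable; fun_prop
  have hmul : ∫ s in (0:ℝ)..1, 2 * (s:ℂ) ^ 2 * z₀ ^ 2 * Complex.exp (((s:ℂ) * z₀) ^ 2)
      = z₀ * ∫ s in (0:ℝ)..1, 2 * (s:ℂ) ^ 2 * z₀ * Complex.exp (((s:ℂ) * z₀) ^ 2) := by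
    rw [← intervalIntegral.integral_const_mul]
    apply intervalIntegral.integral_congr
    intro s _
    ring
  rw [hsplit, hmul] at ftc
  simp only [Complex.ofReal_one, Complex.ofReal_zero, one_mul, zero_mul, mul_one, sub_zero] at ftc
  simp only [id_eq, one_mul]
  exact ftc


end DawsonProofAux

/-- The Dawson integral of a complex argument:
`F(z) = e^{-z²} · ∫₀^z e^{t²} dt`, the integral taken along the segment from `0` to `z`,
parametrized as `z · ∫₀¹ e^{(sz)²} ds`. -/
noncomputable def dawsonIntegral (z : ℂ) : ℂ :=
  Complex.exp (-z ^ 2) * (z * ∫ s in (0:ℝ)..1, Complex.exp (((s : ℂ) * z) ^ 2))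

open DawsonProofAux in
theorem dawson_eq_integral_sin (z : ℂ) :
    dawsonIntegral z =
      (1 / 2 : ℂ) *
        ∫ t in Set.Ioi (0:ℝ), Complex.exp (-(t : ℂ) ^ 2 / 4) * Complex.sin (z * (t : ℂ)) := by
  have hg : ∀ w : ℂ, HasDerivAt
      (fun z : ℂ => Complex.exp (z ^ 2) * (∫ t in Set.Ioi (0:ℝ), sI z t)
        - 2 * (z * ∫ s in (0:ℝ)..1, Complex.exp (((s:ℂ) * z) ^ 2))) 0 w := by
    intro w
    have hexp : HasDerivAt (fun z : ℂ => Complex.exp (z ^ 2))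
        (Complex.exp (w ^ 2) * ((2:ℕ) * w ^ 1)) w :=
      (Complex.hasDerivAt_exp _).comp w (hasDerivAt_pow 2 w)
    have h := (hexp.mul (I_deriv w)).sub ((D_deriv w).const_mul 2)
    refine h.congr_deriv ?_
    rw [I_parts w]
    push_cast; ring
  have key := is_const_of_deriv_eq_zero (𝕜 := ℂ)
    (f := fun z : ℂ => Complex.exp (z ^ 2) * (∫ t in Set.Ioi (0:ℝ), sI z t)
      - 2 * (z * ∫ s in (0:ℝ)..1, Complex.exp (((s:ℂ) * z) ^ 2)))
    (fun x => (hg x).differentiableAt) (fun x => (hg x).deriv) z 0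
  have h0 : (∫ t in Set.Ioi (0:ℝ), sI 0 t) = 0 := by
    simp [sI]
  simp only [h0, mul_zero, zero_mul, sub_zero, Complex.exp_zero, one_mul] at key
  -- key : exp (z^2) * ∫ sI z - 2 * (z * ∫ ...) = 0
  have hmul : Complex.exp (-z ^ 2) * Complex.exp (z ^ 2) = 1 := by
    rw [← Complex.exp_add]; simp
  rw [dawsonIntegral]
  show _ = (1 / 2 : ℂ) * ∫ t in Set.Ioi (0:ℝ), sI z t
  linear_combination ((∫ t in Set.Ioi (0:ℝ), sI z t) / 2) * hmul
    - (Complex.exp (-z ^ 2) / 2) * key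
end

section
/- For all real numbers x and y with y ≥ 0, the Faddeeva function admits the integral representation w(x + iy) = (1/√π) · ∫₀^∞ exp(−t²/4) · exp(−y·t) · exp(i·x·t) dt. -/
open Real MeasureTheory Set Filter intervalIntegral Topology

/-- The Faddeeva function (complex error function):
`w(z) = e^{-z²} · (1 + (2i/√π) · ∫₀^z e^{t²} dt)`, the integral taken along the segment
from `0` to `z`, parametrized as `z · ∫₀¹ e^{(sz)²} ds`. -/
noncomputable def faddeeva (z : ℂ) : ℂ :=
  Complex.exp (-z ^ 2) *
    (1 + (2 * Complex.I / (Real.sqrt π : ℂ)) *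
      (z * ∫ s in (0:ℝ)..1, Complex.exp (((s : ℂ) * z) ^ 2)))

open MeasureTheory Set Filter Complex in
private lemma norm_cexp_neg_sq (u : ℝ) (a : ℂ) :
    ‖Complex.exp (-(((u : ℂ) - a) ^ 2))‖ = Real.exp (a.im ^ 2 - (u - a.re) ^ 2) := by
  rw [Complex.norm_exp]
  congr 1
  simp only [Complex.neg_re, pow_two, Complex.mul_re, Complex.sub_re, Complex.sub_im,
    Complex.ofReal_re, Complex.ofReal_im]
  ring

open MeasureTheory Set Filter Complex in
private lemma integrableOn_gshift (a : ℂ) :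
    IntegrableOn (fun u : ℝ => Complex.exp (-(((u : ℂ) - a) ^ 2))) (Ioi 0) := by
  have h : IntegrableOn (fun u : ℝ =>
      Real.exp (a.im ^ 2 + 2 * a.re ^ 2) * Real.exp (-(1/2) * u ^ 2)) (Ioi 0) :=
    ((integrable_exp_neg_mul_sq (by norm_num : (0:ℝ) < 1/2)).const_mul _).integrableOn
  refine h.integrable.mono ?_ ?_
  · exact (Complex.continuous_exp.comp (by fun_prop)).aestronglyMeasurable
  · filter_upwards with u
    rw [norm_cexp_neg_sq]
    have : a.im ^ 2 - (u - a.re) ^ 2 ≤ a.im ^ 2 + 2 * a.re ^ 2 + (-(1/2) * u ^ 2) := by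
      nlinarith [sq_nonneg (u - 2 * a.re)]
    calc Real.exp (a.im ^ 2 - (u - a.re) ^ 2)
        ≤ Real.exp (a.im ^ 2 + 2 * a.re ^ 2 + (-(1/2) * u ^ 2)) := Real.exp_le_exp.2 this
      _ = Real.exp (a.im ^ 2 + 2 * a.re ^ 2) * Real.exp (-(1/2) * u ^ 2) := Real.exp_add _ _
      _ ≤ ‖Real.exp (a.im ^ 2 + 2 * a.re ^ 2) * Real.exp (-(1/2) * u ^ 2)‖ := le_abs_self _

open MeasureTheory Set Filter Complex in
private lemma hasDerivAt_inner (u : ℝ) (a : ℂ) :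
    HasDerivAt (fun b : ℂ => Complex.exp (-(((u : ℂ) - b) ^ 2)))
      (2 * ((u : ℂ) - a) * Complex.exp (-(((u : ℂ) - a) ^ 2))) a := by
  have h1 : HasDerivAt (fun b : ℂ => -(((u : ℂ) - b) ^ 2)) (2 * ((u : ℂ) - a)) a := by
    have : HasDerivAt (fun b : ℂ => ((u : ℂ) - b)) (-1) a := (hasDerivAt_id a).const_sub _
    exact ((this.pow 2).neg).congr_deriv (by simp)
  simpa [mul_comm] using h1.cexp

open MeasureTheory Set Filter Complex in
private lemma hasDerivAt_Fun1 (a₀ : ℂ) :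
    HasDerivAt (fun a : ℂ => ∫ u in Ioi (0:ℝ), Complex.exp (-(((u : ℂ) - a) ^ 2)))
      (Complex.exp (-a₀ ^ 2)) a₀ := by
  set R : ℝ := ‖a₀‖ + 1 with hR
  have hRpos : 0 < R := by positivity
  set bound : ℝ → ℝ := fun u => 2 * (|u| + R) * Real.exp (3 * R ^ 2) * Real.exp (-(1/2) * u ^ 2)
    with hbound_def
  have key_bound : ∀ (a : ℂ), a ∈ Metric.ball a₀ 1 → ∀ u : ℝ,
      ‖2 * ((u : ℂ) - a) * Complex.exp (-(((u : ℂ) - a) ^ 2))‖ ≤ bound u := by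
    intro a ha u
    have haR : ‖a‖ ≤ R := by
      have := mem_ball_iff_norm.mp ha
      have := norm_sub_norm_le a a₀
      simp only [hR]; linarith
    have hre : |a.re| ≤ R := (Complex.abs_re_le_norm a).trans haR
    have him : |a.im| ≤ R := (Complex.abs_im_le_norm a).trans haR
    rw [norm_mul, norm_cexp_neg_sq]
    have h1 : ‖2 * ((u : ℂ) - a)‖ ≤ 2 * (|u| + R) := by
      have hu : ‖(u : ℂ) - a‖ ≤ |u| + R := by
        refine (norm_sub_le _ _).trans (add_le_add ?_ haR)
        rw [Complex.norm_real, Real.norm_eq_abs]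
      rw [norm_mul]
      have h2 : ‖(2 : ℂ)‖ = 2 := by
        rw [Complex.norm_two]
      rw [h2]
      have := norm_nonneg ((u : ℂ) - a)
      nlinarith
    have h2 : Real.exp (a.im ^ 2 - (u - a.re) ^ 2)
        ≤ Real.exp (3 * R ^ 2) * Real.exp (-(1/2) * u ^ 2) := by
      rw [← Real.exp_add]
      apply Real.exp_le_exp.2
      have h3 : a.im ^ 2 ≤ R ^ 2 := sq_le_sq' (by linarith [abs_le.mp him]) (abs_le.mp him).2
      nlinarith [sq_nonneg (u - 2 * a.re), abs_le.mp hre, sq_nonneg u]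
    have hmul := mul_le_mul h1 h2 (Real.exp_pos _).le (by positivity : (0:ℝ) ≤ 2 * (|u| + R))
    refine hmul.trans (le_of_eq ?_)
    rw [hbound_def]
    ring
  have bound_int : IntegrableOn bound (Ioi (0:ℝ)) := by
    have h1 : Integrable (fun u : ℝ => u * Real.exp (-(1/2) * u ^ 2)) :=
      integrable_mul_exp_neg_mul_sq (by norm_num)
    have h2 : Integrable (fun u : ℝ => Real.exp (-(1/2) * u ^ 2)) :=
      integrable_exp_neg_mul_sq (by norm_num)
    have : Integrable (fun u : ℝ => |u| * Real.exp (-(1/2) * u ^ 2)) := by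
      refine h1.abs.congr ?_
      filter_upwards with u
      rw [abs_mul, abs_of_pos (Real.exp_pos _)]
    have := ((this.add (h2.const_mul R)).const_mul (2 * Real.exp (3 * R ^ 2)))
    refine this.integrableOn.congr_fun ?_ measurableSet_Ioi
    intro u _
    simp only [hbound_def, Pi.add_apply]
    ring
  have main := hasDerivAt_integral_of_dominated_loc_of_deriv_le
    (F := fun (a : ℂ) (u : ℝ) => Complex.exp (-(((u : ℂ) - a) ^ 2)))
    (F' := fun (a : ℂ) (u : ℝ) => 2 * ((u : ℂ) - a) * Complex.exp (-(((u : ℂ) - a) ^ 2)))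
    (μ := volume.restrict (Ioi (0:ℝ))) (x₀ := a₀) (bound := bound)
    (Metric.ball_mem_nhds a₀ one_pos)
    (Eventually.of_forall fun a =>
      (Complex.continuous_exp.comp (by fun_prop)).aestronglyMeasurable)
    (integrableOn_gshift a₀)
    ((by fun_prop : Continuous fun u : ℝ =>
      2 * ((u : ℂ) - a₀) * Complex.exp (-(((u : ℂ) - a₀) ^ 2))).aestronglyMeasurable)
    (Eventually.of_forall fun u a ha => key_bound a ha u)
    bound_int
    (Eventually.of_forall fun u a _ => hasDerivAt_inner u a)
  have hval : (∫ u in Ioi (0:ℝ), 2 * ((u : ℂ) - a₀) * Complex.exp (-(((u : ℂ) - a₀) ^ 2)))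
      = Complex.exp (-a₀ ^ 2) := by
    have hderiv : ∀ v ∈ Ici (0:ℝ), HasDerivAt (fun u : ℝ => -Complex.exp (-(((u : ℂ) - a₀) ^ 2)))
        (2 * ((v : ℂ) - a₀) * Complex.exp (-(((v : ℂ) - a₀) ^ 2))) v := by
      intro v _
      have h1 : HasDerivAt (fun w : ℂ => -Complex.exp (-((w - a₀) ^ 2)))
          (2 * ((v : ℂ) - a₀) * Complex.exp (-(((v : ℂ) - a₀) ^ 2))) (v : ℂ) := by
        have h2 : HasDerivAt (fun w : ℂ => -((w - a₀) ^ 2)) (-(2 * ((v:ℂ) - a₀))) (v:ℂ) := by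
          have : HasDerivAt (fun w : ℂ => w - a₀) 1 (v:ℂ) := (hasDerivAt_id _).sub_const _
          exact ((this.pow 2).neg).congr_deriv (by simp)
        have := h2.cexp.neg
        refine this.congr_deriv ?_
        ring
      exact h1.comp_ofReal
    have htend : Tendsto (fun u : ℝ => -Complex.exp (-(((u : ℂ) - a₀) ^ 2))) atTop (𝓝 0) := by
      rw [tendsto_zero_iff_norm_tendsto_zero]
      have : ∀ u : ℝ, ‖-Complex.exp (-(((u : ℂ) - a₀) ^ 2))‖
          = Real.exp (a₀.im ^ 2 - (u - a₀.re) ^ 2) := fun u => by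
        rw [norm_neg, norm_cexp_neg_sq]
      simp only [this]
      apply Real.tendsto_exp_atBot.comp
      apply tendsto_atBot_add_const_left
      apply tendsto_neg_atBot_iff.mpr
      have : Tendsto (fun u : ℝ => u - a₀.re) atTop atTop :=
        tendsto_atTop_add_const_right _ _ tendsto_id
      exact (tendsto_pow_atTop (two_ne_zero)).comp this
    have f'int : IntegrableOn
        (fun u : ℝ => 2 * ((u : ℂ) - a₀) * Complex.exp (-(((u : ℂ) - a₀) ^ 2))) (Ioi 0) := by
      refine bound_int.integrable.mono ?_ ?_
      · exact (by fun_prop : Continuous fun u : ℝ =>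
          2 * ((u : ℂ) - a₀) * Complex.exp (-(((u : ℂ) - a₀) ^ 2))).aestronglyMeasurable
      · filter_upwards with u
        refine (key_bound a₀ (Metric.mem_ball_self one_pos) u).trans (le_abs_self _)
    have := integral_Ioi_of_hasDerivAt_of_tendsto' hderiv f'int htend
    rw [this]
    push_cast
    simp
  rw [hval] at main
  exact main.2

open MeasureTheory Set Filter Complex intervalIntegral in
private lemma hasDerivAt_Fun2 (a₀ : ℂ) :
    HasDerivAt (fun a : ℂ => a * ∫ s in (0:ℝ)..1, Complex.exp (-(((s : ℂ) * a) ^ 2)))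
      (Complex.exp (-a₀ ^ 2)) a₀ := by
  set R : ℝ := ‖a₀‖ + 1 with hR
  have hRpos : 0 < R := by positivity
  have key_bound : ∀ (a : ℂ), a ∈ Metric.ball a₀ 1 → ∀ s : ℝ, s ∈ Set.uIoc (0:ℝ) 1 →
      ‖(1 - 2 * (s:ℂ)^2 * a^2) * Complex.exp (-(((s : ℂ) * a) ^ 2))‖
        ≤ (1 + 2 * R ^ 2) * Real.exp (R ^ 2) := by
    intro a ha s hs
    have haR : ‖a‖ ≤ R := by
      have := mem_ball_iff_norm.mp ha
      have := norm_sub_norm_le a a₀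
      simp only [hR]; linarith
    have hs01 : 0 < s ∧ s ≤ 1 := by
      rw [Set.uIoc_of_le (by norm_num : (0:ℝ) ≤ 1)] at hs
      exact ⟨hs.1, hs.2⟩
    have hsabs : |s| ≤ 1 := by rw [abs_of_pos hs01.1]; exact hs01.2
    rw [norm_mul]
    have habs : ‖a‖ ≤ R := haR
    have habs0 := norm_nonneg a
    have h1 : ‖(1 - 2 * (s:ℂ)^2 * a^2)‖ ≤ 1 + 2 * R ^ 2 := by
      refine (norm_sub_le _ _).trans ?_
      simp only [norm_one, norm_mul, norm_pow, Complex.norm_two,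
        Complex.norm_real, Real.norm_eq_abs]
      have hss : |s| ^ 2 ≤ 1 := by nlinarith [abs_nonneg s]
      have haa : ‖a‖ ^ 2 ≤ R ^ 2 := by nlinarith
      nlinarith
    have h2 : ‖Complex.exp (-(((s : ℂ) * a) ^ 2))‖ ≤ Real.exp (R ^ 2) := by
      rw [Complex.norm_exp]
      apply Real.exp_le_exp.2
      have hle : (-(((s : ℂ) * a) ^ 2)).re ≤ ‖((s : ℂ) * a) ^ 2‖ := by
        rw [Complex.neg_re]
        exact (neg_le_abs _).trans (Complex.abs_re_le_norm _)
      refine hle.trans ?_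
      rw [norm_pow, norm_mul, Complex.norm_real, Real.norm_eq_abs]
      have h5 : |s| * ‖a‖ ≤ R := by nlinarith [abs_nonneg s]
      exact pow_le_pow_left₀ (mul_nonneg (abs_nonneg s) habs0) h5 2
    exact mul_le_mul h1 h2 (norm_nonneg _) (by positivity)
  have main := intervalIntegral.hasDerivAt_integral_of_dominated_loc_of_deriv_le
    (F := fun (a : ℂ) (s : ℝ) => a * Complex.exp (-(((s : ℂ) * a) ^ 2)))
    (F' := fun (a : ℂ) (s : ℝ) => (1 - 2 * (s:ℂ)^2 * a^2) * Complex.exp (-(((s : ℂ) * a) ^ 2)))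
    (x₀ := a₀) (a := (0:ℝ)) (b := 1) (μ := volume)
    (bound := fun _ => (1 + 2 * R ^ 2) * Real.exp (R ^ 2))
    (Metric.ball_mem_nhds a₀ one_pos)
    (Eventually.of_forall fun a => ((by fun_prop : Continuous fun s : ℝ =>
      a * Complex.exp (-(((s : ℂ) * a) ^ 2))).aestronglyMeasurable).restrict)
    ((Continuous.intervalIntegrable (by fun_prop) _ _))
    (((by fun_prop : Continuous fun s : ℝ =>
      (1 - 2 * (s:ℂ)^2 * a₀^2) * Complex.exp (-(((s : ℂ) * a₀) ^ 2))).aestronglyMeasurable).restrict)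
    (Eventually.of_forall fun s hs a ha => key_bound a ha s hs)
    (intervalIntegrable_const)
    (Eventually.of_forall fun s _ a _ => by
      have h1 : HasDerivAt (fun b : ℂ => -(((s : ℂ) * b) ^ 2)) (-(2 * (s:ℂ)^2 * a)) a := by
        have h0 : HasDerivAt (fun b : ℂ => (s : ℂ) * b) (s : ℂ) a := by simpa using (hasDerivAt_id a).const_mul (s : ℂ)
        have := (h0.pow 2).neg
        refine this.congr_deriv ?_
        simp only [Nat.cast_ofNat, pow_one]
        ring
      have h2 := h1.cexp
      have h3 := (hasDerivAt_id a).mul h2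
      refine h3.congr_deriv ?_
      simp only [id_eq, one_mul]
      ring)
  have hval : (∫ s in (0:ℝ)..1,
      (1 - 2 * (s:ℂ)^2 * a₀^2) * Complex.exp (-(((s : ℂ) * a₀) ^ 2))) = Complex.exp (-a₀ ^ 2) := by
    have hFTC := intervalIntegral.integral_eq_sub_of_hasDerivAt
      (f := fun s : ℝ => (s : ℂ) * Complex.exp (-(((s : ℂ) * a₀) ^ 2)))
      (f' := fun s : ℝ => (1 - 2 * (s:ℂ)^2 * a₀^2) * Complex.exp (-(((s : ℂ) * a₀) ^ 2)))
      (a := (0:ℝ)) (b := 1)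
      (fun s _ => by
        have h1 : HasDerivAt (fun w : ℂ => -((w * a₀) ^ 2)) (-(2 * (s:ℂ) * a₀^2)) ((s:ℂ)) := by
          have h0 : HasDerivAt (fun w : ℂ => w * a₀) a₀ ((s:ℂ)) := by simpa using (hasDerivAt_id ((s:ℂ))).mul_const a₀
          have := (h0.pow 2).neg
          refine this.congr_deriv ?_
          simp only [Nat.cast_ofNat, pow_one]
          ring
        have h2 := h1.cexp
        have h3 := ((hasDerivAt_id ((s:ℂ))).mul h2)
        have h4 : HasDerivAt (fun w : ℂ => w * Complex.exp (-((w * a₀) ^ 2)))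
            ((1 - 2 * (s:ℂ)^2 * a₀^2) * Complex.exp (-(((s : ℂ) * a₀) ^ 2))) ((s:ℂ)) := by
          refine h3.congr_deriv ?_
          simp only [id_eq, one_mul]
          ring
        exact h4.comp_ofReal)
      ((Continuous.intervalIntegrable (by fun_prop) _ _))
    rw [hFTC]
    norm_num
  rw [hval] at main
  have := main.2
  refine this.congr_of_eventuallyEq ?_
  filter_upwards with a
  rw [← intervalIntegral.integral_const_mul]

open MeasureTheory Set Filter Complex in
private lemma key_identity (a : ℂ) :
    (∫ u in Ioi (0:ℝ), Complex.exp (-(((u : ℂ) - a) ^ 2)))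
      = (Real.sqrt π : ℂ) / 2 + a * ∫ s in (0:ℝ)..1, Complex.exp (-(((s : ℂ) * a) ^ 2)) := by
  set f : ℂ → ℂ := fun a => (∫ u in Ioi (0:ℝ), Complex.exp (-(((u : ℂ) - a) ^ 2)))
    - a * ∫ s in (0:ℝ)..1, Complex.exp (-(((s : ℂ) * a) ^ 2)) with hf
  have hderiv : ∀ b : ℂ, HasDerivAt f 0 b := fun b => by
    exact ((hasDerivAt_Fun1 b).sub (hasDerivAt_Fun2 b)).congr_deriv (sub_self _)
  have hconst : f a = f 0 :=
    is_const_of_deriv_eq_zero (fun b => (hderiv b).differentiableAt)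
      (fun b => (hderiv b).deriv) a 0
  have hf0 : f 0 = (Real.sqrt π : ℂ) / 2 := by
    have h1 : (∫ u in Ioi (0:ℝ), Complex.exp (-(((u : ℂ) - 0) ^ 2)))
        = (π / (1:ℂ)) ^ (1 / 2 : ℂ) / 2 := by
      have := integral_gaussian_complex_Ioi (b := 1) (by norm_num)
      simpa using this
    have h2 : ((π : ℂ) / 1) ^ (1 / 2 : ℂ) = (Real.sqrt π : ℂ) := by
      rw [div_one]
      rw [show (1 / 2 : ℂ) = ((1 / 2 : ℝ) : ℂ) by norm_num]
      rw [← Complex.ofReal_cpow Real.pi_pos.le, Real.sqrt_eq_rpow]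
    simp only [hf, h1, h2]
    simp
  have : f a = (Real.sqrt π : ℂ) / 2 := hconst.trans hf0
  rw [hf] at this
  linear_combination this

set_option maxHeartbeats 2000000 in
private lemma main_repr (z : ℂ) :
    faddeeva z = (1 / (Real.sqrt π : ℂ)) *
      ∫ t in Ioi (0:ℝ), Complex.exp (-(t : ℂ) ^ 2 / 4 + Complex.I * z * (t : ℂ)) := by
  have step1 : ∀ t : ℝ,
      Complex.exp (-(t : ℂ) ^ 2 / 4 + Complex.I * z * (t : ℂ))
      = Complex.exp (-z ^ 2) *
        Complex.exp (-((((1/2 : ℝ) * t : ℝ) : ℂ) - Complex.I * z) ^ 2) := by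
    intro t
    rw [← Complex.exp_add]
    exact congrArg Complex.exp (by push_cast; linear_combination (z ^ 2) * Complex.I_sq)
  rw [integral_congr_ae (Eventually.of_forall fun t => step1 t), MeasureTheory.integral_const_mul]
  have step2 : (∫ t in Ioi (0:ℝ),
        Complex.exp (-((((1/2 : ℝ) * t : ℝ) : ℂ) - Complex.I * z) ^ 2))
      = (2 : ℂ) * ∫ u in Ioi (0:ℝ), Complex.exp (-(((u : ℂ) - Complex.I * z) ^ 2)) := by
    have := integral_comp_mul_left_Ioi
      (fun u : ℝ => Complex.exp (-(((u : ℂ) - Complex.I * z) ^ 2))) 0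
      (by norm_num : (0:ℝ) < 1/2)
    rw [mul_zero] at this
    rw [this]
    simp [Complex.real_smul]
  rw [step2, key_identity (Complex.I * z)]
  have hint : (∫ s in (0:ℝ)..1, Complex.exp (-(((s : ℂ) * (Complex.I * z)) ^ 2)))
      = ∫ s in (0:ℝ)..1, Complex.exp (((s : ℂ) * z) ^ 2) := by
    apply intervalIntegral.integral_congr
    intro s _
    exact congrArg Complex.exp (by linear_combination (-((s:ℂ)^2 * z^2)) * Complex.I_sq)
  rw [hint, faddeeva]
  have hsqrt : (Real.sqrt π : ℂ) ≠ 0 := by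
    simp only [ne_eq, Complex.ofReal_eq_zero]
    exact (Real.sqrt_ne_zero'.mpr Real.pi_pos)
  field_simp

theorem faddeeva_integral_repr (x y : ℝ) (hy : 0 ≤ y) :
    faddeeva ((x : ℂ) + Complex.I * (y : ℂ)) =
      (1 / (Real.sqrt π : ℂ)) *
        ∫ t in Set.Ioi (0:ℝ),
          Complex.exp (-(t : ℂ) ^ 2 / 4) * Complex.exp (-(y : ℂ) * (t : ℂ)) *
            Complex.exp (Complex.I * (x : ℂ) * (t : ℂ)) := by
  rw [main_repr]
  congr 1
  apply MeasureTheory.integral_congr_ae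
  filter_upwards with t
  rw [← Complex.exp_add, ← Complex.exp_add]
  exact congrArg Complex.exp (by linear_combination ((y:ℂ) * (t:ℂ)) * Complex.I_sq)
end

section
/- For all real numbers x and y with y ≥ 0, the real part of the Faddeeva function satisfies Re w(x + iy) = (1/√π) · ∫₀^∞ exp(−t²/4) · exp(−y·t) · cos(x·t) dt. -/
open Real MeasureTheory Set

section FaddeevaAux

lemma integrable_E (c : ℂ) :
    Integrable (fun t : ℝ => Complex.exp (-(t:ℂ)^2/4 + c*t)) := by
  have h := integrable_cexp_quadratic (b := (1/4 : ℂ)) (by norm_num) c 0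
  have h2 : ∀ x : ℝ, (-(1/4:ℂ) * (x:ℂ)^2 + c*x + 0) = (-(x:ℂ)^2/4 + c*x) := by
    intro x; ring
  simpa only [h2] using h

lemma norm_E (w : ℂ) : ‖Complex.exp w‖ = Real.exp w.re := Complex.norm_exp w

lemma integrable_rexp (A : ℝ) :
    Integrable (fun t : ℝ => Real.exp (-t^2/4 + A*t)) := by
  have h := (integrable_E ((A:ℂ))).norm
  refine h.congr (Filter.Eventually.of_forall fun t => ?_)
  simp only [norm_E]
  rw [show (-(t:ℂ)^2/4 + A*t) = (((-t^2/4 + A*t : ℝ)):ℂ) by push_cast; ring]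
  simp [← Complex.ofReal_pow]

lemma norm_E' (t : ℝ) (c : ℂ) :
    ‖Complex.exp (-(t:ℂ)^2/4 + c*t)‖ = Real.exp (-t^2/4 + c.re * t) := by
  simp only [norm_E]
  congr 1
  simp [Complex.add_re, Complex.div_re, ← Complex.ofReal_pow, Complex.mul_re]

lemma integrable_texp (A : ℝ) :
    IntegrableOn (fun t : ℝ => t * Real.exp (-t^2/4 + A*t)) (Ioi 0) := by
  refine Integrable.mono' ((integrable_rexp (A+1)).integrableOn)
    ((continuous_id.mul (by continuity)).aestronglyMeasurable.restrict) ?_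
  rw [ae_restrict_iff' measurableSet_Ioi]
  refine Filter.Eventually.of_forall fun t ht => ?_
  have ht' : (0:ℝ) < t := ht
  have h1 : t ≤ Real.exp t := (Real.add_one_le_exp t).trans' (by linarith)
  rw [Real.norm_eq_abs, abs_of_nonneg (by positivity)]
  calc t * Real.exp (-t^2/4 + A*t) ≤ Real.exp t * Real.exp (-t^2/4 + A*t) := by
        apply mul_le_mul_of_nonneg_right h1 (Real.exp_nonneg _)
    _ = Real.exp (-t^2/4 + (A+1)*t) := by rw [← Real.exp_add]; ring_nf

lemma integrable_tE (c : ℂ) :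
    IntegrableOn (fun t : ℝ => (t:ℂ) * Complex.exp (-(t:ℂ)^2/4 + c*t)) (Ioi 0) := by
  refine Integrable.mono' (integrable_texp c.re)
    ((Complex.continuous_ofReal.mul (by continuity)).aestronglyMeasurable.restrict) ?_
  rw [ae_restrict_iff' measurableSet_Ioi]
  refine Filter.Eventually.of_forall fun t ht => ?_
  have ht' : (0:ℝ) < t := ht
  rw [norm_mul, norm_E', Complex.norm_real, Real.norm_eq_abs, abs_of_nonneg ht'.le]

lemma hasDerivAt_E (w : ℂ) (t : ℝ) :
    HasDerivAt (fun t : ℝ => Complex.exp (-(t:ℂ)^2/4 + w*t))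
      ((w - t/2) * Complex.exp (-(t:ℂ)^2/4 + w*t)) t := by
  have h : HasDerivAt (fun u : ℂ => Complex.exp (-u^2/4 + w*u))
      ((w - t/2) * Complex.exp (-(t:ℂ)^2/4 + w*t)) (t:ℂ) := by
    have h1 : HasDerivAt (fun u : ℂ => -u^2/4 + w*u) (w - t/2) (t:ℂ) := by
      have := (((hasDerivAt_pow 2 (t:ℂ)).neg.div_const 4).add
        ((hasDerivAt_id (t:ℂ)).const_mul w))
      exact this.congr_deriv (by ring)
    simpa [mul_comm] using h1.cexp
  exact h.comp_ofReal

lemma tendsto_E (w : ℂ) :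
    Filter.Tendsto (fun t : ℝ => Complex.exp (-(t:ℂ)^2/4 + w*t)) Filter.atTop (nhds 0) := by
  rw [tendsto_zero_iff_norm_tendsto_zero]
  simp only [norm_E']
  apply Real.tendsto_exp_atBot.comp
  have : ∀ t : ℝ, -t^2/4 + w.re * t = -(t * (t/4 - w.re)) := fun t => by ring
  simp only [this]
  apply Filter.tendsto_neg_atBot_iff.mpr
  exact Filter.Tendsto.atTop_mul_atTop₀ Filter.tendsto_id
    (Filter.tendsto_atTop_add_const_right _ _ (Filter.tendsto_id.atTop_div_const (by norm_num)))

lemma integrable_dE (w : ℂ) :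
    IntegrableOn (fun t : ℝ => (w - (t:ℂ)/2) * Complex.exp (-(t:ℂ)^2/4 + w*t)) (Ioi 0) := by
  have h1 : IntegrableOn (fun t : ℝ => w * Complex.exp (-(t:ℂ)^2/4 + w*t)) (Ioi 0) :=
    ((integrable_E w).integrableOn).const_mul w
  have h2 := (integrable_tE w).div_const (2:ℂ)
  have := h1.sub (by simpa [mul_div_assoc, div_mul_eq_mul_div, IntegrableOn] using h2)
  refine this.congr (Filter.Eventually.of_forall fun t => ?_)
  simp only [Pi.sub_apply]
  ring

lemma parts (w : ℂ) :
    ∫ t in Ioi (0:ℝ), (w - (t:ℂ)/2) * Complex.exp (-(t:ℂ)^2/4 + w*t) = -1 := by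
  have h := integral_Ioi_of_hasDerivAt_of_tendsto'
    (f := fun t : ℝ => Complex.exp (-(t:ℂ)^2/4 + w*t))
    (f' := fun t : ℝ => (w - (t:ℂ)/2) * Complex.exp (-(t:ℂ)^2/4 + w*t))
    (a := 0) (m := 0)
    (fun t _ => hasDerivAt_E w t) (integrable_dE w) (tendsto_E w)
  simpa using h

lemma hasDerivAt_phi (c : ℂ) (r : ℝ) :
    HasDerivAt (fun r : ℝ => ∫ t in Ioi (0:ℝ), Complex.exp (-(t:ℂ)^2/4 + (r:ℂ)*c*t))
      (∫ t in Ioi (0:ℝ), c * t * Complex.exp (-(t:ℂ)^2/4 + (r:ℂ)*c*t)) r := by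
  set A : ℝ := (|r| + 1) * |c.re| with hA
  have key := hasDerivAt_integral_of_dominated_loc_of_deriv_le (s := Metric.ball r 1) (Metric.ball_mem_nhds r one_pos)
    (F := fun (x : ℝ) (t : ℝ) => Complex.exp (-(t:ℂ)^2/4 + (x:ℂ)*c*t))
    (F' := fun (x : ℝ) (t : ℝ) => c * t * Complex.exp (-(t:ℂ)^2/4 + (x:ℂ)*c*t))
    (x₀ := r) (μ := MeasureTheory.volume.restrict (Ioi 0))
    (bound := fun t => ‖c‖ * (t * Real.exp (-t^2/4 + A*t)))
    (Filter.Eventually.of_forall fun x => (Continuous.aestronglyMeasurable (by continuity)).restrict)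
    ((integrable_E ((r:ℂ)*c)).integrableOn.congr_fun (fun t _ => by ring_nf) measurableSet_Ioi)
    ((Continuous.aestronglyMeasurable (by continuity)).restrict)
    ?_ (((integrable_texp A).const_mul _)) ?_
  · exact key.2
  · rw [ae_restrict_iff' measurableSet_Ioi]
    refine Filter.Eventually.of_forall fun t ht x hx => ?_
    have ht' : (0:ℝ) < t := ht
    have hx' : |x| ≤ |r| + 1 := by
      rw [Metric.mem_ball, Real.dist_eq] at hx
      have := abs_sub_abs_le_abs_sub x r
      linarith
    have hre : ((x:ℂ)*c).re = x * c.re := by simp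
    rw [norm_mul, norm_mul, Complex.norm_real, Real.norm_eq_abs, abs_of_nonneg ht'.le,
      show -(t:ℂ)^2/4 + (x:ℂ)*c*t = -(t:ℂ)^2/4 + ((x:ℂ)*c)*t by ring, norm_E', hre]
    rw [mul_assoc]
    refine mul_le_mul_of_nonneg_left (mul_le_mul_of_nonneg_left ?_ ht'.le) (norm_nonneg c)
    apply Real.exp_le_exp.mpr
    have : x * c.re * t ≤ A * t := by
      refine mul_le_mul_of_nonneg_right ?_ ht'.le
      calc x * c.re ≤ |x * c.re| := le_abs_self _
        _ = |x| * |c.re| := abs_mul _ _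
        _ ≤ (|r| + 1) * |c.re| := by
            exact mul_le_mul_of_nonneg_right hx' (abs_nonneg _)
    linarith
  · refine Filter.Eventually.of_forall fun t x _ => ?_
    have h : HasDerivAt (fun u : ℂ => Complex.exp (-(t:ℂ)^2/4 + u*c*t))
        (c * t * Complex.exp (-(t:ℂ)^2/4 + (x:ℂ)*c*t)) (x:ℂ) := by
      have h1 : HasDerivAt (fun u : ℂ => -(t:ℂ)^2/4 + u*c*t) (c*t) (x:ℂ) := by
        have h2 := ((hasDerivAt_id (x:ℂ)).mul_const (c*(t:ℂ))).const_add (-(t:ℂ)^2/4)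
        exact (h2.congr_deriv (by ring)).congr_of_eventuallyEq
          (Filter.Eventually.of_forall fun u => by simp only [id_eq]; ring)
      simpa [mul_comm] using h1.cexp
    exact h.comp_ofReal

lemma gaussian_quarter :
    ∫ t in Ioi (0:ℝ), Complex.exp (-(t:ℂ)^2/4) = (Real.sqrt π : ℂ) := by
  have h := integral_gaussian_complex_Ioi (b := (1/4 : ℂ)) (by norm_num)
  have h2 : ∀ t : ℝ, Complex.exp (-(1/4:ℂ) * (t:ℂ)^2) = Complex.exp (-(t:ℂ)^2/4) := by
    intro t; ring_nf
  simp only [h2] at h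
  rw [h]
  have h3 : (↑π / (1/4 : ℂ)) = ((4*π : ℝ) : ℂ) := by push_cast; ring
  rw [h3, show ((1:ℂ)/2) = ((1/2 : ℝ) : ℂ) by norm_num,
    ← Complex.ofReal_cpow (by positivity),
    show ((4*π : ℝ) ^ ((1/2:ℝ)) : ℝ) = Real.sqrt (4*π) by rw [Real.sqrt_eq_rpow]]
  rw [Real.sqrt_mul (by norm_num : (0:ℝ) ≤ 4), show Real.sqrt 4 = 2 by
    rw [show (4:ℝ) = 2^2 by norm_num, Real.sqrt_sq (by norm_num)]]
  push_cast
  ring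

lemma main_identity (z : ℂ) :
    ∫ t in Ioi (0:ℝ), Complex.exp (-(t:ℂ)^2/4 + Complex.I*z*t)
      = Complex.exp (-z^2) *
        ((Real.sqrt π : ℂ) + 2*Complex.I*z * ∫ s in (0:ℝ)..1, Complex.exp (((s:ℂ)*z)^2)) := by
  set c : ℂ := Complex.I * z with hc
  set φ : ℝ → ℂ := fun r => ∫ t in Ioi (0:ℝ), Complex.exp (-(t:ℂ)^2/4 + (r:ℂ)*c*t) with hφ
  set g : ℝ → ℂ := fun r => Complex.exp ((r:ℂ)^2*z^2) * φ r
      - 2*Complex.I*z * ∫ s in (0:ℝ)..r, Complex.exp (((s:ℂ)*z)^2) with hg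
  -- derivative of φ, rewritten via integration by parts
  have hφ' : ∀ r : ℝ, HasDerivAt φ (2*c*((r:ℂ)*c*(φ r) + 1)) r := by
    intro r
    have h := hasDerivAt_phi c r
    have hval : (∫ t in Ioi (0:ℝ), c * t * Complex.exp (-(t:ℂ)^2/4 + (r:ℂ)*c*t))
        = 2*c*((r:ℂ)*c*(φ r) + 1) := by
      have hE : ∀ t : ℝ, -(t:ℂ)^2/4 + (r:ℂ)*c*t = -(t:ℂ)^2/4 + ((r:ℂ)*c)*t := fun t => by ring
      have hp := parts ((r:ℂ)*c)
      -- parts : ∫ (rc - t/2) E = -1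
      have hint1 : IntegrableOn (fun t : ℝ => ((r:ℂ)*c) * Complex.exp (-(t:ℂ)^2/4 + ((r:ℂ)*c)*t))
          (Ioi 0) := ((integrable_E ((r:ℂ)*c)).integrableOn).const_mul _
      have hint2 := integrable_tE ((r:ℂ)*c)
      have hsplit : ∫ t in Ioi (0:ℝ), ((r:ℂ)*c - (t:ℂ)/2) * Complex.exp (-(t:ℂ)^2/4 + ((r:ℂ)*c)*t)
          = ((r:ℂ)*c) * φ r - (1/2) * ∫ t in Ioi (0:ℝ), (t:ℂ) * Complex.exp (-(t:ℂ)^2/4 + ((r:ℂ)*c)*t) := by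
        rw [show (fun t : ℝ => ((r:ℂ)*c - (t:ℂ)/2) * Complex.exp (-(t:ℂ)^2/4 + ((r:ℂ)*c)*t))
            = (fun t : ℝ => ((r:ℂ)*c) * Complex.exp (-(t:ℂ)^2/4 + ((r:ℂ)*c)*t)
              - (1/2) * ((t:ℂ) * Complex.exp (-(t:ℂ)^2/4 + ((r:ℂ)*c)*t))) from funext fun t => by ring]
        rw [MeasureTheory.integral_sub hint1 (hint2.const_mul _),
          MeasureTheory.integral_const_mul, MeasureTheory.integral_const_mul]
      rw [hp] at hsplit
      have hT : ∫ t in Ioi (0:ℝ), (t:ℂ) * Complex.exp (-(t:ℂ)^2/4 + ((r:ℂ)*c)*t)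
          = 2 * (((r:ℂ)*c) * φ r + 1) := by
        linear_combination (2:ℂ) * hsplit
      calc (∫ t in Ioi (0:ℝ), c * t * Complex.exp (-(t:ℂ)^2/4 + (r:ℂ)*c*t))
          = c * ∫ t in Ioi (0:ℝ), (t:ℂ) * Complex.exp (-(t:ℂ)^2/4 + ((r:ℂ)*c)*t) := by
            rw [← MeasureTheory.integral_const_mul]
            congr 1; funext t; ring
        _ = 2*c*((r:ℂ)*c*(φ r) + 1) := by rw [hT]; ring
    rw [hval] at h
    exact h
  have hgderiv : ∀ r : ℝ, HasDerivAt g 0 r := by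
    intro r
    have h1 : HasDerivAt (fun r : ℝ => Complex.exp ((r:ℂ)^2*z^2))
        (2*(r:ℂ)*z^2 * Complex.exp ((r:ℂ)^2*z^2)) r := by
      have h : HasDerivAt (fun u : ℂ => Complex.exp (u^2*z^2))
          (2*(r:ℂ)*z^2 * Complex.exp ((r:ℂ)^2*z^2)) (r:ℂ) := by
        have h1 : HasDerivAt (fun u : ℂ => u^2*z^2) (2*(r:ℂ)*z^2) (r:ℂ) := by
          have := (hasDerivAt_pow 2 (r:ℂ)).mul_const (z^2)
          exact this.congr_deriv (by push_cast; ring)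
        simpa [mul_comm] using h1.cexp
      exact h.comp_ofReal
    have h4 : HasDerivAt (fun r : ℝ => ∫ s in (0:ℝ)..r, Complex.exp (((s:ℂ)*z)^2))
        (Complex.exp (((r:ℂ)*z)^2)) r := by
      have hcont : Continuous fun s : ℝ => Complex.exp (((s:ℂ)*z)^2) := by continuity
      exact intervalIntegral.integral_hasDerivAt_right (hcont.intervalIntegrable _ _)
        (hcont.stronglyMeasurableAtFilter _ _) hcont.continuousAt
    have hd := ((h1.mul (hφ' r)).sub ((h4.const_mul (2*Complex.I*z))))
    have : 2*(r:ℂ)*z^2 * Complex.exp ((r:ℂ)^2*z^2) * φ r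
        + Complex.exp ((r:ℂ)^2*z^2) * (2*c*((r:ℂ)*c*(φ r) + 1))
        - 2*Complex.I*z * Complex.exp (((r:ℂ)*z)^2) = 0 := by
      rw [hc, mul_pow]
      linear_combination (2*(r:ℂ)*z^2 * Complex.exp ((r:ℂ)^2*z^2) * φ r) * Complex.I_sq
    rw [this] at hd
    exact hd
  have hconst : g 1 = g 0 :=
    is_const_of_deriv_eq_zero (fun r => (hgderiv r).differentiableAt)
      (fun r => (hgderiv r).deriv) 1 0
  have hg0 : g 0 = (Real.sqrt π : ℂ) := by
    simp only [hg, hφ]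
    norm_num
    exact gaussian_quarter
  rw [hg0] at hconst
  simp only [hg, hφ] at hconst
  push_cast at hconst
  have hφ1 : (∫ t in Ioi (0:ℝ), Complex.exp (-(t:ℂ)^2/4 + Complex.I*z*t))
      = ∫ t in Ioi (0:ℝ), Complex.exp (-(t:ℂ)^2/4 + ((1:ℝ):ℂ)*c*t) := by
    congr 1; funext t; rw [hc]; push_cast; ring_nf
  rw [hφ1]
  have hexp : Complex.exp (((1:ℝ):ℂ)^2*z^2) ≠ 0 := Complex.exp_ne_zero _
  have h1 : Complex.exp (((1:ℝ):ℂ)^2*z^2) * (∫ t in Ioi (0:ℝ), Complex.exp (-(t:ℂ)^2/4 + ((1:ℝ):ℂ)*c*t))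
      - 2*Complex.I*z * ∫ s in (0:ℝ)..1, Complex.exp (((s:ℂ)*z)^2) = (Real.sqrt π : ℂ) := by
    convert hconst using 3 <;> push_cast <;> ring_nf
  have h2 : Complex.exp (-z^2) * Complex.exp (((1:ℝ):ℂ)^2*z^2) = 1 := by
    rw [← Complex.exp_add]; push_cast; ring_nf; exact Complex.exp_zero
  have h2' : Complex.exp (((1:ℝ):ℂ)^2*z^2) * Complex.exp (-z^2) = 1 := by
    rw [← Complex.exp_add]; push_cast; ring_nf; exact Complex.exp_zero
  refine mul_left_cancel₀ hexp ?_
  calc Complex.exp (((1:ℝ):ℂ)^2*z^2) * (∫ t in Ioi (0:ℝ), Complex.exp (-(t:ℂ)^2/4 + ((1:ℝ):ℂ)*c*t))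
      = (Real.sqrt π : ℂ) + 2*Complex.I*z * ∫ s in (0:ℝ)..1, Complex.exp (((s:ℂ)*z)^2) := by
        linear_combination h1
    _ = Complex.exp (((1:ℝ):ℂ)^2*z^2) * (Complex.exp (-z^2) * ((Real.sqrt π : ℂ) + 2*Complex.I*z * ∫ s in (0:ℝ)..1, Complex.exp (((s:ℂ)*z)^2))) := by
        rw [← mul_assoc, h2', one_mul]

end FaddeevaAux

theorem re_faddeeva_integral_repr (x y : ℝ) (hy : 0 ≤ y) :
    (faddeeva ((x : ℂ) + Complex.I * (y : ℂ))).re =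
      (1 / Real.sqrt π) *
        ∫ t in Set.Ioi (0:ℝ),
          Real.exp (-t ^ 2 / 4) * Real.exp (-y * t) * Real.cos (x * t) := by
  have hπ : 0 < Real.sqrt π := Real.sqrt_pos.mpr Real.pi_pos
  set z : ℂ := (x : ℂ) + Complex.I * (y : ℂ) with hz
  have hπ' : (Real.sqrt π : ℂ) ≠ 0 := Complex.ofReal_ne_zero.mpr hπ.ne'
  have hfad : (Real.sqrt π : ℂ) * faddeeva z
      = Complex.exp (-z^2) *
        ((Real.sqrt π : ℂ) + 2*Complex.I*z * ∫ s in (0:ℝ)..1, Complex.exp (((s:ℂ)*z)^2)) := by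
    rw [faddeeva]
    field_simp
  have h1 : ∫ t in Ioi (0:ℝ), Complex.exp (-(t:ℂ)^2/4 + Complex.I*z*t)
      = (Real.sqrt π : ℂ) * faddeeva z := by rw [main_identity z, ← hfad]
  have hint : Integrable (fun t : ℝ => Complex.exp (-(t:ℂ)^2/4 + Complex.I*z*t))
      (MeasureTheory.volume.restrict (Ioi 0)) := by
    have := (integrable_E (Complex.I*z)).integrableOn (s := Ioi 0)
    exact this
  have h3 : ∫ t in Ioi (0:ℝ), (Complex.exp (-(t:ℂ)^2/4 + Complex.I*z*t)).re
      = ((Real.sqrt π : ℂ) * faddeeva z).re := by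
    rw [← h1]
    exact integral_re hint
  have h4 : ∀ t : ℝ, (Complex.exp (-(t:ℂ)^2/4 + Complex.I*z*t)).re
      = Real.exp (-t^2/4) * Real.exp (-y*t) * Real.cos (x*t) := by
    intro t
    have harg : -(t:ℂ)^2/4 + Complex.I*z*t
        = ((-t^2/4 - y*t : ℝ) : ℂ) + ((x*t : ℝ) : ℂ) * Complex.I := by
      rw [hz]
      push_cast
      linear_combination (y*t : ℂ) * Complex.I_sq
    rw [harg, Complex.exp_re]
    simp only [Complex.add_re, Complex.ofReal_re, Complex.mul_re, Complex.I_re,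
      Complex.ofReal_im, Complex.I_im, Complex.add_im, Complex.mul_im]
    rw [show -t^2/4 - y*t = -t^2/4 + -(y*t) by ring, Real.exp_add]
    norm_num [neg_mul, Real.exp_add]
  simp only [h4] at h3
  have h5 : ((Real.sqrt π : ℂ) * faddeeva z).re = Real.sqrt π * (faddeeva z).re :=
    Complex.re_ofReal_mul _ _
  rw [h5] at h3
  rw [show (faddeeva z).re = (1/Real.sqrt π) * (Real.sqrt π * (faddeeva z).re) by
    field_simp, ← h3]
end

section
/- For all real numbers x and y with y ≥ 0, the imaginary part of the Faddeeva function satisfies Im w(x + iy) = (1/√π) · ∫₀^∞ exp(−t²/4) · exp(−y·t) · sin(x·t) dt. -/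
open Real

open Real MeasureTheory Set Filter Complex

noncomputable def Fd (z : ℂ) : ℂ :=
  ∫ t in Set.Ioi (0:ℝ), Complex.exp (-(t:ℂ)^2/4 + Complex.I * z * t)

-- norm of integrand
lemma norm_integrand (z : ℂ) (t : ℝ) :
    ‖Complex.exp (-(t:ℂ)^2/4 + Complex.I * z * t)‖ = Real.exp (-t^2/4 - z.im * t) := by
  rw [Complex.norm_exp]
  congr 1
  simp [Complex.add_re, Complex.div_re, Complex.mul_re, Complex.mul_im, ← Complex.ofReal_pow]
  ring

lemma integrable_exp_quad (r : ℝ) :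
    Integrable (fun t : ℝ => Real.exp (-t^2/4 + r*t)) := by
  have h := (integrable_cexp_quadratic (b := (1/4:ℂ)) (by norm_num) (r:ℂ) 0).norm
  refine h.congr ?_
  filter_upwards with t
  rw [Complex.norm_exp]
  congr 1
  simp [Complex.add_re, Complex.mul_re, ← Complex.ofReal_pow]
  ring

lemma integrableA (z : ℂ) :
    IntegrableOn (fun t : ℝ => Complex.exp (-(t:ℂ)^2/4 + Complex.I * z * t)) (Set.Ioi 0) := by
  have h := integrable_cexp_quadratic (b := (1/4:ℂ)) (by norm_num) (Complex.I * z) 0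
  refine (h.congr ?_).integrableOn
  filter_upwards with t
  congr 1
  ring

lemma deriv_inner (z₀ : ℂ) (t : ℝ) :
    HasDerivAt (fun z : ℂ => Complex.exp (-(t:ℂ)^2/4 + Complex.I * z * t))
      (Complex.I * t * Complex.exp (-(t:ℂ)^2/4 + Complex.I * z₀ * t)) z₀ := by
  have h : HasDerivAt (fun z : ℂ => -(t:ℂ)^2/4 + Complex.I * z * t) (Complex.I * t) z₀ := by
    have := ((hasDerivAt_id z₀).const_mul (Complex.I)).mul_const (t:ℂ)
    simpa using (this.const_add (-(t:ℂ)^2/4))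
  simpa [mul_comm] using h.cexp

lemma hasDerivAt_Fd (z₀ : ℂ) :
    Integrable (fun t : ℝ => Complex.I * t * Complex.exp (-(t:ℂ)^2/4 + Complex.I * z₀ * t))
      (volume.restrict (Set.Ioi 0)) ∧
    HasDerivAt Fd
      (∫ t in Set.Ioi (0:ℝ), Complex.I * t * Complex.exp (-(t:ℂ)^2/4 + Complex.I * z₀ * t)) z₀ := by
  have meascont : ∀ z : ℂ, Continuous
      (fun t : ℝ => Complex.exp (-(t:ℂ)^2/4 + Complex.I * z * t)) := by
    intro z; fun_prop
  apply hasDerivAt_integral_of_dominated_loc_of_deriv_le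
    (F := fun (z : ℂ) (t : ℝ) => Complex.exp (-(t:ℂ)^2/4 + Complex.I * z * t))
    (F' := fun (z : ℂ) (t : ℝ) => Complex.I * t * Complex.exp (-(t:ℂ)^2/4 + Complex.I * z * t))
    (bound := fun t : ℝ => Real.exp (-t^2/4 + (|z₀.im| + 2) * t)) (Metric.ball_mem_nhds z₀ one_pos)
  case hF_meas =>
    filter_upwards with z
    exact ((meascont z).aestronglyMeasurable).restrict
  case hF_int => exact integrableA z₀
  case hF'_meas =>
    exact (Continuous.aestronglyMeasurable (by fun_prop)).restrict
  case h_bound =>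
    filter_upwards [ae_restrict_mem measurableSet_Ioi] with t ht z hz
    have ht' : (0:ℝ) < t := ht
    rw [norm_mul, norm_mul, Complex.norm_I, one_mul, Complex.norm_real, Real.norm_eq_abs,
      abs_of_pos ht', norm_integrand]
    have h1 : |z.im - z₀.im| ≤ ‖z - z₀‖ := by
      simpa using Complex.abs_im_le_norm (z - z₀)
    have h2 : ‖z - z₀‖ < 1 := by simpa [dist_eq_norm] using hz
    have him : -z.im ≤ |z₀.im| + 1 := by
      cases' abs_le.1 (h1.trans h2.le) with ha hb
      cases' abs_cases z₀.im with h h <;> linarith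
    have hle : t ≤ Real.exp t := (Real.add_one_le_exp t).trans' (by linarith)
    calc t * Real.exp (-t^2/4 - z.im * t)
        ≤ Real.exp t * Real.exp (-t^2/4 + (|z₀.im| + 1) * t) := by
          apply mul_le_mul hle (Real.exp_le_exp.2 (by nlinarith)) (Real.exp_pos _).le
            (Real.exp_pos _).le
      _ = Real.exp (-t^2/4 + (|z₀.im| + 2) * t) := by rw [← Real.exp_add]; ring_nf
  case bound_integrable => exact (integrable_exp_quad _).integrableOn
  case h_diff =>
    filter_upwards with t z _
    exact deriv_inner z t

lemma integrable_t_exp (z : ℂ) :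
    IntegrableOn (fun t : ℝ => (t:ℂ) * Complex.exp (-(t:ℂ)^2/4 + Complex.I * z * t))
      (Set.Ioi 0) := by
  have h := (hasDerivAt_Fd z).1
  have := h.const_mul (-Complex.I)
  refine this.congr ?_
  filter_upwards with t
  rw [show -Complex.I * (Complex.I * (t:ℂ) * Complex.exp (-(t:ℂ)^2/4 + Complex.I * z * t))
    = (-Complex.I * Complex.I) * ((t:ℂ) * Complex.exp (-(t:ℂ)^2/4 + Complex.I * z * t)) by ring,
    show -Complex.I * Complex.I = 1 by rw [neg_mul, Complex.I_mul_I, neg_neg],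
    one_mul]

lemma deriv_t_inner (z : ℂ) (t : ℝ) :
    HasDerivAt (fun t : ℝ => (-2 : ℂ) * Complex.exp (-(t:ℂ)^2/4 + Complex.I * z * t))
      ((t:ℂ) * Complex.exp (-(t:ℂ)^2/4 + Complex.I * z * t)
        - 2 * Complex.I * z * Complex.exp (-(t:ℂ)^2/4 + Complex.I * z * t)) t := by
  have h1 : HasDerivAt (fun w : ℂ => -w^2/4 + Complex.I * z * w) (-(t:ℂ)/2 + Complex.I * z)
      (t : ℂ) := by
    have hp : HasDerivAt (fun w : ℂ => -w^2/4) (-(t:ℂ)/2) (t:ℂ) := by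
      have := (hasDerivAt_pow 2 (t:ℂ)).div_const 4 |>.neg
      convert this using 1
      · rfl
      · rfl
      · ext w; rw [Pi.neg_apply]; ring
      · push_cast; ring
    have hl : HasDerivAt (fun w : ℂ => Complex.I * z * w) (Complex.I * z) (t:ℂ) := by
      simpa using (hasDerivAt_id (t:ℂ)).const_mul (Complex.I * z)
    exact hp.add hl
  have h2 := (h1.comp_ofReal).cexp.const_mul (-2 : ℂ)
  convert h2 using 1
  · rfl
  ring

lemma tendsto_exp_quad_zero (r : ℝ) :
    Tendsto (fun t : ℝ => Real.exp (-t^2/4 + r * t)) atTop (nhds 0) := by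
  have h : Tendsto (fun t : ℝ => -t^2/4 + r * t) atTop atBot := by
    have hb : Tendsto (fun t : ℝ => r - t/4) atTop atBot := by
      have hn : Tendsto (fun t : ℝ => -(t/4)) atTop atBot :=
        tendsto_neg_atTop_atBot.comp (tendsto_id.atTop_div_const (by norm_num))
      have := tendsto_atBot_add_const_left atTop r hn
      refine this.congr fun t => by ring
    have h1 : Tendsto (fun t : ℝ => t * (r - t/4)) atTop atBot :=
      Tendsto.atTop_mul_atBot₀ tendsto_id hb
    refine h1.congr fun t => by ring
  exact Real.tendsto_exp_atBot.comp h

lemma tendsto_G (z : ℂ) :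
    Tendsto (fun t : ℝ => (-2 : ℂ) * Complex.exp (-(t:ℂ)^2/4 + Complex.I * z * t))
      atTop (nhds 0) := by
  rw [tendsto_zero_iff_norm_tendsto_zero]
  have h := (tendsto_exp_quad_zero (-z.im)).const_mul 2
  rw [mul_zero] at h
  refine h.congr fun t => ?_
  rw [norm_mul, norm_integrand]
  norm_num
  ring_nf

lemma ode_Fd (z : ℂ) :
    (∫ t in Set.Ioi (0:ℝ), Complex.I * t * Complex.exp (-(t:ℂ)^2/4 + Complex.I * z * t))
      = 2 * Complex.I - 2 * z * Fd z := by
  have key : (∫ t in Set.Ioi (0:ℝ),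
      ((t:ℂ) * Complex.exp (-(t:ℂ)^2/4 + Complex.I * z * t)
        - 2 * Complex.I * z * Complex.exp (-(t:ℂ)^2/4 + Complex.I * z * t)))
      = 0 - (-2 : ℂ) * Complex.exp (-(0:ℂ)^2/4 + Complex.I * z * 0) := by
    refine integral_Ioi_of_hasDerivAt_of_tendsto' (fun t _ => deriv_t_inner z t) ?_ (tendsto_G z)
    exact (integrable_t_exp z).sub (((integrableA z).const_mul (2 * Complex.I * z)))
  rw [integral_sub (integrable_t_exp z) ((integrableA z).const_mul (2 * Complex.I * z)),
    integral_const_mul] at key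
  have h0 : (0:ℂ) - (-2 : ℂ) * Complex.exp (-(0:ℂ)^2/4 + Complex.I * z * 0) = 2 := by
    norm_num
  rw [h0] at key
  have hFd : (∫ t in Set.Ioi (0:ℝ), Complex.exp (-(t:ℂ)^2/4 + Complex.I * z * t)) = Fd z := rfl
  rw [hFd] at key
  have hsplit : (∫ t in Set.Ioi (0:ℝ),
      Complex.I * t * Complex.exp (-(t:ℂ)^2/4 + Complex.I * z * t))
      = Complex.I * ∫ t in Set.Ioi (0:ℝ), (t:ℂ) * Complex.exp (-(t:ℂ)^2/4 + Complex.I * z * t) := by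
    rw [← integral_const_mul]
    congr 1; ext t; ring
  rw [hsplit]
  have : (∫ t in Set.Ioi (0:ℝ), (t:ℂ) * Complex.exp (-(t:ℂ)^2/4 + Complex.I * z * t))
      = 2 + 2 * Complex.I * z * Fd z := by linear_combination key
  rw [this]
  have hI := Complex.I_mul_I
  linear_combination (2 * z * Fd z) * hI

lemma Fd_zero : Fd 0 = (Real.sqrt π : ℂ) := by
  have h : Fd 0 = ∫ t in Set.Ioi (0:ℝ), ((Real.exp (-(1/4) * t^2) : ℝ) : ℂ) := by
    unfold Fd
    congr 1; ext t
    rw [Complex.ofReal_exp]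
    congr 1
    push_cast
    ring
  rw [h, show (∫ (t:ℝ) in Set.Ioi (0:ℝ), ((Real.exp (-(1/4)*t^2) : ℝ):ℂ))
      = ((∫ t in Set.Ioi (0:ℝ), Real.exp (-(1/4)*t^2) : ℝ):ℂ) from integral_ofReal]
  norm_cast
  have := integral_gaussian_Ioi (1/4)
  rw [show π / (1/4) = 4 * π by ring, show (4:ℝ) * π = 2^2 * π by norm_num,
    Real.sqrt_mul (by positivity), Real.sqrt_sq (by norm_num)] at this
  rw [this]; ring

lemma deriv_prod_inner (z s : ℂ) :
    HasDerivAt (fun w : ℂ => w * Complex.exp ((s * w)^2))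
      (Complex.exp ((s * z)^2) + z * (Complex.exp ((s * z)^2) * (2 * s^2 * z))) z := by
  have hsq : HasDerivAt (fun w : ℂ => (s * w)^2) (2 * s^2 * z) z := by
    have h1 : HasDerivAt (fun w : ℂ => s * w) s z := by
      simpa using (hasDerivAt_id z).const_mul s
    have := (hasDerivAt_pow 2 (s * z)).comp z h1
    convert this using 1
    · rfl
    · rfl
    · rfl
    push_cast; ring
  have := (hasDerivAt_id z).mul hsq.cexp
  convert this using 1
  · rfl
  · rfl
  · rfl
  simp

lemma hasDerivAt_H (z₀ : ℂ) :
    HasDerivAt (fun z : ℂ => z * ∫ s in (0:ℝ)..1, Complex.exp (((s:ℂ) * z)^2))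
      (Complex.exp (z₀^2)) z₀ := by
  have heq : (fun z : ℂ => z * ∫ s in (0:ℝ)..1, Complex.exp (((s:ℂ) * z)^2))
      = fun z : ℂ => ∫ s in (0:ℝ)..1, z * Complex.exp (((s:ℂ) * z)^2) := by
    ext z
    rw [← intervalIntegral.integral_const_mul]
  rw [heq]
  set R : ℝ := ‖z₀‖ + 1 with hR
  have hder : HasDerivAt (fun z : ℂ => ∫ s in (0:ℝ)..1, z * Complex.exp (((s:ℂ) * z)^2))
      (∫ s in (0:ℝ)..1,
        (Complex.exp (((s:ℂ) * z₀)^2) + z₀ * (Complex.exp (((s:ℂ) * z₀)^2) * (2 * (s:ℂ)^2 * z₀))))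
      z₀ := by
    have key := intervalIntegral.hasDerivAt_integral_of_dominated_loc_of_deriv_le
      (F := fun (z : ℂ) (s : ℝ) => z * Complex.exp (((s:ℂ) * z)^2))
      (F' := fun (z : ℂ) (s : ℝ) =>
        Complex.exp (((s:ℂ) * z)^2) + z * (Complex.exp (((s:ℂ) * z)^2) * (2 * (s:ℂ)^2 * z)))
      (bound := fun _ : ℝ => (1 + 2 * R^2) * Real.exp (R^2))
      (a := (0:ℝ)) (b := (1:ℝ)) (x₀ := z₀) (μ := MeasureTheory.volume) (Metric.ball_mem_nhds z₀ one_pos) ?_ ?_ ?_ ?_ ?_ ?_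
    · exact key.2
    · filter_upwards with z
      exact (Continuous.aestronglyMeasurable (by fun_prop)).restrict
    · apply Continuous.intervalIntegrable; fun_prop
    · exact (Continuous.aestronglyMeasurable (by fun_prop)).restrict
    · filter_upwards with s hs z hz
      have hs1 : |s| ≤ 1 := by
        rcases hs with ⟨h1, h2⟩
        rw [abs_le]; constructor <;> simp at h1 h2 ⊢ <;> linarith
      have hzR : ‖z‖ ≤ R := by
        have := (norm_sub_norm_le z z₀).trans (le_of_lt (by simpa [dist_eq_norm] using hz))
        rw [hR]; linarith
      have hexp : ‖Complex.exp (((s:ℂ) * z)^2)‖ ≤ Real.exp (R^2) := by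
        rw [Complex.norm_exp]
        apply Real.exp_le_exp.2
        calc ((((s:ℂ) * z))^2).re ≤ ‖(((s:ℂ) * z))^2‖ := Complex.re_le_norm _
          _ = ‖(s:ℂ) * z‖^2 := by rw [norm_pow]
          _ ≤ R^2 := by
              rw [norm_mul, Complex.norm_real, Real.norm_eq_abs]
              have h1 : |s| * ‖z‖ ≤ 1 * R := by
                have : (0:ℝ) < R := by positivity
                gcongr
              have h2 : (0:ℝ) ≤ |s| * ‖z‖ := by positivity
              nlinarith
      calc ‖Complex.exp (((s:ℂ) * z)^2) + z * (Complex.exp (((s:ℂ) * z)^2) * (2 * (s:ℂ)^2 * z))‖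
          ≤ ‖Complex.exp (((s:ℂ) * z)^2)‖
            + ‖z‖ * (‖Complex.exp (((s:ℂ) * z)^2)‖ * (2 * |s|^2 * ‖z‖)) := by
            refine (norm_add_le _ _).trans ?_
            gcongr
            rw [norm_mul, norm_mul, norm_mul, norm_mul, norm_pow, Complex.norm_real,
              Real.norm_eq_abs]
            simp
        _ ≤ Real.exp (R^2) + R * (Real.exp (R^2) * (2 * 1 * R)) := by
            have h0 : (0:ℝ) ≤ ‖z‖ := norm_nonneg z
            have hRpos : (0:ℝ) < R := by positivity
            have hs2 : |s|^2 ≤ 1 := by nlinarith [abs_nonneg s]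
            gcongr <;> first | exact hexp | exact hzR | exact hs2 | positivity
        _ = (1 + 2 * R^2) * Real.exp (R^2) := by ring
    · exact intervalIntegrable_const
    · filter_upwards with s _ z _
      exact deriv_prod_inner z (s:ℂ)
  convert hder using 1
  symm
  have hint : ∀ s : ℝ, HasDerivAt (fun u : ℝ => (u:ℂ) * Complex.exp (((u:ℂ) * z₀)^2))
      (Complex.exp (((s:ℂ) * z₀)^2)
        + z₀ * (Complex.exp (((s:ℂ) * z₀)^2) * (2 * (s:ℂ)^2 * z₀))) s := by
    intro s
    have hsq : HasDerivAt (fun w : ℂ => (w * z₀)^2) (2 * z₀^2 * (s:ℂ)) (s:ℂ) := by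
      have h1 : HasDerivAt (fun w : ℂ => w * z₀) z₀ (s:ℂ) := by
        simpa using (hasDerivAt_id (s:ℂ)).mul_const z₀
      have := (hasDerivAt_pow 2 ((s:ℂ) * z₀)).comp (s:ℂ) h1
      convert this using 1
      · rfl
      · rfl
      · rfl
      push_cast; ring
    have h2 := ((hasDerivAt_id (s:ℂ)).mul hsq.cexp).comp_ofReal
    convert h2 using 1
    · rfl
    simp only [id]
    ring
  have hii : IntervalIntegrable (fun s : ℝ => Complex.exp (((s:ℂ) * z₀)^2)
      + z₀ * (Complex.exp (((s:ℂ) * z₀)^2) * (2 * (s:ℂ)^2 * z₀))) MeasureTheory.volume 0 1 := by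
    apply Continuous.intervalIntegrable; fun_prop
  have hcalc := intervalIntegral.integral_eq_sub_of_hasDerivAt (fun s _ => hint s) hii
  rw [hcalc]
  norm_num

noncomputable def W (z : ℂ) : ℂ :=
  Complex.exp (z^2) * Fd z
    - 2 * Complex.I * (z * ∫ s in (0:ℝ)..1, Complex.exp (((s:ℂ) * z)^2))

lemma hasDerivAt_W (z : ℂ) : HasDerivAt W 0 z := by
  have h1 : HasDerivAt (fun w : ℂ => Complex.exp (w^2)) (Complex.exp (z^2) * (2 * z)) z := by
    have := ((hasDerivAt_pow 2 z)).cexp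
    convert this using 1
    · rfl
    push_cast; ring
  have h2 := (hasDerivAt_Fd z).2
  rw [ode_Fd z] at h2
  have h3 := h1.mul h2
  have h4 := ((hasDerivAt_H z).const_mul (2 * Complex.I))
  have h5 := h3.sub h4
  convert h5 using 1
  · rfl
  · rfl
  · rfl
  ring_nf

lemma W_eq (z : ℂ) : W z = (Real.sqrt π : ℂ) := by
  have hconst : W z = W 0 :=
    is_const_of_deriv_eq_zero (fun w => (hasDerivAt_W w).differentiableAt)
      (fun w => (hasDerivAt_W w).deriv) z 0
  rw [hconst]
  unfold W
  rw [Fd_zero]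
  norm_num

lemma faddeeva_eq (z : ℂ) : faddeeva z = ((Real.sqrt π : ℂ))⁻¹ * Fd z := by
  have hπ : ((Real.sqrt π : ℂ)) ≠ 0 := by
    simp only [ne_eq, Complex.ofReal_eq_zero]
    positivity
  have hexp : Complex.exp (-z^2) * Complex.exp (z^2) = 1 := by
    rw [← Complex.exp_add]; simp
  have hW := W_eq z
  unfold W at hW
  rw [eq_inv_mul_iff_mul_eq₀ hπ]
  calc (Real.sqrt π : ℂ) * faddeeva z
      = Complex.exp (-z^2) * ((Real.sqrt π : ℂ)
          + 2 * Complex.I * (z * ∫ s in (0:ℝ)..1, Complex.exp (((s : ℂ) * z) ^ 2))) := by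
        unfold faddeeva; field_simp
    _ = Complex.exp (-z^2) * (Complex.exp (z^2) * Fd z) := by rw [← hW]; ring
    _ = Fd z := by rw [← mul_assoc, hexp, one_mul]

theorem im_faddeeva_integral_repr (x y : ℝ) (hy : 0 ≤ y) :
    (faddeeva ((x : ℂ) + Complex.I * (y : ℂ))).im =
      (1 / Real.sqrt π) *
        ∫ t in Set.Ioi (0:ℝ),
          Real.exp (-t ^ 2 / 4) * Real.exp (-y * t) * Real.sin (x * t) := by
  set z : ℂ := (x : ℂ) + Complex.I * (y : ℂ) with hz
  rw [faddeeva_eq z]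
  rw [show ((Real.sqrt π : ℂ))⁻¹ = (((Real.sqrt π)⁻¹ : ℝ) : ℂ) by push_cast; ring]
  rw [Complex.im_ofReal_mul, one_div]
  congr 1
  have him := integral_im (μ := MeasureTheory.volume.restrict (Set.Ioi (0:ℝ))) (integrableA z)
  rw [show (Fd z).im = ∫ t in Set.Ioi (0:ℝ),
      (Complex.exp (-(t:ℂ)^2/4 + Complex.I * z * t)).im from him.symm]
  refine MeasureTheory.integral_congr_ae ?_
  filter_upwards with t
  rw [Complex.exp_im]
  have hre : (-(t:ℂ)^2/4 + Complex.I * z * t).re = -t^2/4 - y * t := by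
    simp [hz, Complex.add_re, Complex.mul_re, Complex.mul_im, ← Complex.ofReal_pow]
    ring
  have him2 : (-(t:ℂ)^2/4 + Complex.I * z * t).im = x * t := by
    simp [hz, Complex.add_im, Complex.mul_re, Complex.mul_im, ← Complex.ofReal_pow]
  rw [hre, him2, show -t^2/4 - y*t = -t^2/4 + (-y*t) by ring, Real.exp_add]
end

section
/- For every real number x, the Voigt function tends to the Gaussian as y tends to 0 from above: lim_{y → 0⁺} K(x, y) = e^{−x²}, where K(x,y) = (y/π) · ∫_{−∞}^{∞} e^{−t²} / (y² + (x − t)²) dt. -/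
open Real Filter Topology MeasureTheory

/-- The Voigt function `K(x,y) = (y/π) · ∫_{-∞}^{∞} e^{-t²} / (y² + (x-t)²) dt`. -/
noncomputable def voigtK (x y : ℝ) : ℝ :=
  (y / π) * ∫ t : ℝ, Real.exp (-t ^ 2) / (y ^ 2 + (x - t) ^ 2)

lemma voigtK_eq (x : ℝ) {y : ℝ} (hy : 0 < y) :
    voigtK x y = (1 / π) * ∫ u : ℝ, Real.exp (-(x + y * u) ^ 2) / (1 + u ^ 2) := by
  have h1 : ∫ u : ℝ, Real.exp (-(x + y * u) ^ 2) / (y ^ 2 + (x - (x + y * u)) ^ 2)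
      = |y⁻¹| • ∫ t : ℝ, Real.exp (-t ^ 2) / (y ^ 2 + (x - t) ^ 2) := by
    have := MeasureTheory.Measure.integral_comp_mul_left
      (fun s : ℝ => Real.exp (-(x + s) ^ 2) / (y ^ 2 + (x - (x + s)) ^ 2)) y
    rw [this]
    congr 1
    exact MeasureTheory.integral_add_left_eq_self (μ := MeasureTheory.volume) (fun t : ℝ => Real.exp (-t ^ 2) / (y ^ 2 + (x - t) ^ 2)) x
  have h2 : ∀ u : ℝ, Real.exp (-(x + y * u) ^ 2) / (y ^ 2 + (x - (x + y * u)) ^ 2)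
      = (y ^ 2)⁻¹ * (Real.exp (-(x + y * u) ^ 2) / (1 + u ^ 2)) := by
    intro u
    have : y ^ 2 + (x - (x + y * u)) ^ 2 = y ^ 2 * (1 + u ^ 2) := by ring
    rw [this]
    field_simp
  simp_rw [h2] at h1
  rw [MeasureTheory.integral_const_mul] at h1
  unfold voigtK
  rw [abs_of_pos (inv_pos.2 hy)] at h1
  have hy2 : (y : ℝ) ^ 2 ≠ 0 := by positivity
  have : ∫ t : ℝ, Real.exp (-t ^ 2) / (y ^ 2 + (x - t) ^ 2)
      = (1 / y) * ∫ u : ℝ, Real.exp (-(x + y * u) ^ 2) / (1 + u ^ 2) := by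
    rw [smul_eq_mul] at h1
    rw [← mul_right_inj' (inv_ne_zero hy.ne'), ← h1]
    ring
  rw [this]
  field_simp

theorem voigtK_tendsto_gaussian (x : ℝ) :
    Tendsto (fun y : ℝ => voigtK x y) (𝓝[>] 0) (𝓝 (Real.exp (-x ^ 2))) := by
  have hI : Tendsto (fun y : ℝ => ∫ u : ℝ, Real.exp (-(x + y * u) ^ 2) / (1 + u ^ 2))
      (𝓝[>] 0) (𝓝 (∫ u : ℝ, Real.exp (-x ^ 2) / (1 + u ^ 2))) := by
    apply MeasureTheory.tendsto_integral_filter_of_dominated_convergence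
      (fun u : ℝ => (1 + u ^ 2)⁻¹)
    · filter_upwards with y
      exact (Continuous.div (by continuity) (by continuity)
        (fun u => by positivity)).aestronglyMeasurable
    · filter_upwards with y
      filter_upwards with u
      rw [Real.norm_eq_abs, abs_div, abs_of_pos (by positivity : (0:ℝ) < 1 + u ^ 2)]
      rw [div_le_iff₀ (by positivity), inv_mul_cancel₀ (by positivity : (1:ℝ) + u ^ 2 ≠ 0)]
      rw [abs_of_pos (Real.exp_pos _)]
      exact Real.exp_le_one_iff.2 (by nlinarith [sq_nonneg (x + y * u)])
    · exact integrable_inv_one_add_sq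
    · filter_upwards with u
      have : Continuous fun y : ℝ => Real.exp (-(x + y * u) ^ 2) / (1 + u ^ 2) := by
        apply Continuous.div (by continuity) continuous_const (fun _ => by positivity)
      have h0 : Tendsto (fun y : ℝ => Real.exp (-(x + y * u) ^ 2) / (1 + u ^ 2)) (𝓝 0)
          (𝓝 (Real.exp (-x ^ 2) / (1 + u ^ 2))) := by simpa using this.tendsto 0
      exact h0.mono_left nhdsWithin_le_nhds
  have hval : ∫ u : ℝ, Real.exp (-x ^ 2) / (1 + u ^ 2) = Real.exp (-x ^ 2) * π := by
    simp_rw [div_eq_mul_inv, MeasureTheory.integral_const_mul, integral_univ_inv_one_add_sq]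
  rw [hval] at hI
  have h2 : Tendsto (fun y : ℝ => (1 / π) *
      ∫ u : ℝ, Real.exp (-(x + y * u) ^ 2) / (1 + u ^ 2)) (𝓝[>] 0)
      (𝓝 ((1 / π) * (Real.exp (-x ^ 2) * π))) := hI.const_mul _
  have hπ : (1 / π) * (Real.exp (-x ^ 2) * π) = Real.exp (-x ^ 2) := by
    field_simp
  rw [hπ] at h2
  apply h2.congr'
  filter_upwards [self_mem_nhdsWithin] with y hy
  exact (voigtK_eq x hy).symm
end

section
/- For every real number x, lim_{y → 0⁺} L(x, y) = (2/√π) · F(x), where L(x,y) = (1/π) · ∫_{−∞}^{∞} (x − t)·e^{−t²} / (y² + (x − t)²) dt and F is the Dawson integral of a real argument. -/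
open Real Filter Topology MeasureTheory Set

/-- The L-function `L(x,y) = (1/π) · ∫_{-∞}^{∞} (x-t)·e^{-t²} / (y² + (x-t)²) dt`. -/
noncomputable def Lfun (x y : ℝ) : ℝ :=
  (1 / π) * ∫ t : ℝ, (x - t) * Real.exp (-t ^ 2) / (y ^ 2 + (x - t) ^ 2)

/-- The Dawson integral of a real argument: `F(x) = e^{-x²} · ∫₀^x e^{t²} dt`. -/
noncomputable def dawsonReal (x : ℝ) : ℝ :=
  Real.exp (-x ^ 2) * ∫ t in (0:ℝ)..x, Real.exp (t ^ 2)

lemma gauss_integrable (c : ℝ) : Integrable (fun s : ℝ => Real.exp (-s^2 + c*s)) := by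
  have h : ∀ s : ℝ, -s^2 + c*s = c^2/4 + -((s - c/2)^2) := fun s => by ring
  simp_rw [h, Real.exp_add]
  apply Integrable.const_mul
  have := (integrable_exp_neg_mul_sq (b := 1) one_pos).comp_sub_right (c/2)
  simpa using this

lemma gauss_integral (c : ℝ) :
    ∫ s : ℝ, Real.exp (-s^2 + c*s) = Real.sqrt π * Real.exp (c^2/4) := by
  have h : ∀ s : ℝ, -s^2 + c*s = c^2/4 + -((s - c/2)^2) := fun s => by ring
  simp_rw [h, Real.exp_add]
  rw [integral_const_mul,
    integral_sub_right_eq_self (fun s => Real.exp (-s^2)) (c/2)]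
  have : ∫ s : ℝ, Real.exp (-s^2) = Real.sqrt π := by
    simpa using integral_gaussian 1
  rw [this, mul_comm]

lemma fold_integral (f : ℝ → ℝ) (hf : Integrable f) :
    ∫ s, f s = ∫ s in Ioi (0:ℝ), (f s + f (-s)) := by
  have h2 : IntegrableOn (fun s => f (-s)) (Ioi (0:ℝ)) := hf.comp_neg.integrableOn
  rw [integral_add hf.integrableOn h2, integral_comp_neg_Ioi, neg_zero, add_comm]
  exact (intervalIntegral.integral_Iic_add_Ioi hf.integrableOn hf.integrableOn).symm

lemma exp_sub_exp_neg_le {t : ℝ} (ht : 0 ≤ t) :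
    Real.exp t - Real.exp (-t) ≤ 2 * t * Real.exp t := by
  have h1 : -2*t + 1 ≤ Real.exp (-2*t) := by simpa using Real.add_one_le_exp (-2*t)
  have h2 : Real.exp (-t) = Real.exp t * Real.exp (-2*t) := by
    rw [← Real.exp_add]; ring_nf
  nlinarith [Real.exp_pos t]

lemma abs_exp_sub_exp_neg_le (a : ℝ) :
    |Real.exp a - Real.exp (-a)| ≤ 2 * |a| * Real.exp |a| := by
  rcases le_or_gt 0 a with h | h
  · rw [abs_of_nonneg h, abs_of_nonneg]
    · exact exp_sub_exp_neg_le h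
    · simpa using Real.exp_le_exp.2 (by linarith : -a ≤ a)
  · rw [abs_of_neg h, abs_of_nonpos]
    · have := exp_sub_exp_neg_le (t := -a) (by linarith)
      rw [neg_neg] at this; linarith
    · simpa using Real.exp_le_exp.2 (by linarith : a ≤ -a)

noncomputable def Jfun (x : ℝ) : ℝ :=
  ∫ s in Ioi (0:ℝ), Real.exp (-s^2) * (Real.exp (2*x*s) - Real.exp (-(2*x*s))) / s

lemma Jfun_hasDeriv (x : ℝ) :
    HasDerivAt Jfun (2 * Real.sqrt π * Real.exp (x^2)) x := by
  have hmain := hasDerivAt_integral_of_dominated_loc_of_deriv_le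
    (μ := volume.restrict (Ioi (0:ℝ))) (x₀ := x) (s := Metric.ball x 1)
    (F := fun u s => Real.exp (-s^2) * (Real.exp (2*u*s) - Real.exp (-(2*u*s))) / s)
    (F' := fun u s => 2 * (Real.exp (-s^2) * (Real.exp (2*u*s) + Real.exp (-(2*u*s)))))
    (bound := fun s => 4 * Real.exp (-s^2 + 2*(|x|+1)*s))
    (Metric.ball_mem_nhds x one_pos) ?_ ?_ ?_ ?_ ?_ ?_
  · have h2 := hmain.2
    have e1 : (fun s : ℝ => 2 * Real.exp (-s^2 + 2*x*s) + 2 * Real.exp (-(-s)^2 + 2*x*(-s)))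
        = (fun s : ℝ => 2 * (Real.exp (-s^2) * (Real.exp (2*x*s) + Real.exp (-(2*x*s))))) := by
      funext s
      have a2 : -(-s)^2 + 2*x*(-s) = -s^2 + -(2*x*s) := by ring
      rw [a2, Real.exp_add, Real.exp_add]; ring
    have heq : (∫ s in Ioi (0:ℝ),
        2 * (Real.exp (-s^2) * (Real.exp (2*x*s) + Real.exp (-(2*x*s)))))
        = 2 * Real.sqrt π * Real.exp (x^2) := by
      rw [← e1, ← fold_integral _ ((gauss_integrable (2*x)).const_mul 2),
        integral_const_mul, gauss_integral (2*x)]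
      have : (2*x)^2/4 = x^2 := by ring
      rw [this]; ring
    rw [heq] at h2
    exact h2
  · -- measurability of F u
    refine Eventually.of_forall fun u => ?_
    apply Measurable.aestronglyMeasurable
    fun_prop
  · -- integrability of F x
    apply Integrable.mono' (g := fun s => (4 * |x|) * Real.exp (-s^2 + 2*|x| * s))
    · exact (((gauss_integrable (2*|x|)).const_mul (4 * |x|))).integrableOn
    · apply Measurable.aestronglyMeasurable; fun_prop
    · filter_upwards [ae_restrict_mem measurableSet_Ioi] with s hs
      have hs0 : (0:ℝ) < s := hs
      have hb := abs_exp_sub_exp_neg_le (2*x*s)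
      have habs : |2*x*s| = 2*|x| * s := by
        rw [abs_mul, abs_mul, abs_of_nonneg hs0.le, abs_two]
      rw [habs] at hb
      have : |Real.exp (-s^2) * (Real.exp (2*x*s) - Real.exp (-(2*x*s))) / s|
          = Real.exp (-s^2) * |Real.exp (2*x*s) - Real.exp (-(2*x*s))| / s := by
        rw [abs_div, abs_mul, abs_of_nonneg hs0.le, abs_of_nonneg (Real.exp_pos _).le]
      rw [Real.norm_eq_abs, this, Real.exp_add]
      rw [div_le_iff₀ hs0]
      have h1 : Real.exp (-s^2) * |Real.exp (2*x*s) - Real.exp (-(2*x*s))|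
          ≤ Real.exp (-s^2) * (2*(2*|x| * s) * Real.exp (2*|x| * s)) :=
        mul_le_mul_of_nonneg_left hb (Real.exp_pos _).le
      nlinarith [Real.exp_pos (-s^2), Real.exp_pos (2*|x| * s), abs_nonneg x]
  · -- measurability of F' x
    apply Measurable.aestronglyMeasurable; fun_prop
  · -- bound
    filter_upwards [ae_restrict_mem measurableSet_Ioi] with s hs u hu
    have hs0 : (0:ℝ) < s := hs
    have hu' : |u| ≤ |x| + 1 := by
      have := mem_ball_iff_norm.1 hu
      have h2 : |u - x| < 1 := by simpa [Real.norm_eq_abs] using this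
      calc |u| = |x + (u - x)| := by ring_nf
        _ ≤ |x| + |u - x| := abs_add_le _ _
        _ ≤ |x| + 1 := by linarith
    have key : ∀ a : ℝ, |a| ≤ 2*(|x|+1)*s → Real.exp a ≤ Real.exp (2*(|x|+1)*s) :=
      fun a ha => Real.exp_le_exp.2 ((le_abs_self a).trans ha)
    have hb1 : Real.exp (2*u*s) ≤ Real.exp (2*(|x|+1)*s) := by
      apply key; rw [abs_mul, abs_mul, abs_two, abs_of_nonneg hs0.le]
      have : |u| * s ≤ (|x|+1) * s := mul_le_mul_of_nonneg_right hu' hs0.le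
      linarith
    have hb2 : Real.exp (-(2*u*s)) ≤ Real.exp (2*(|x|+1)*s) := by
      apply key; rw [abs_neg, abs_mul, abs_mul, abs_two, abs_of_nonneg hs0.le]
      have : |u| * s ≤ (|x|+1) * s := mul_le_mul_of_nonneg_right hu' hs0.le
      linarith
    rw [Real.norm_eq_abs, abs_of_nonneg (by positivity), Real.exp_add]
    have he : Real.exp (-s^2) ≤ 1 := Real.exp_le_one_iff.2 (by nlinarith)
    nlinarith [Real.exp_pos (-s^2), Real.exp_pos (2*(|x|+1)*s),
      mul_le_mul_of_nonneg_left (add_le_add hb1 hb2) (Real.exp_pos (-s^2)).le,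
      mul_le_mul_of_nonneg_right he (by positivity : (0:ℝ) ≤ 2 * Real.exp (2*(|x|+1)*s))]
  · -- integrability of the bound
    exact ((gauss_integrable (2*(|x|+1))).const_mul 4).integrableOn
  · -- derivative
    filter_upwards [ae_restrict_mem measurableSet_Ioi] with s hs u hu
    have hs0 : (0:ℝ) < s := hs
    have h0 : HasDerivAt (fun u : ℝ => 2*u*s) (2*s) u := by
      have := (hasDerivAt_id u).const_mul (2*s)
      simp only [mul_one] at this
      rw [show (fun u : ℝ => 2*u*s) = (fun y => 2*s*id y) by funext y; simp only [id]; ring]; exact this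
    have h1 := h0.exp
    have h2 := h0.neg.exp
    have h3 := ((h1.sub h2).div_const s).const_mul (Real.exp (-s^2))
    have hsne : s ≠ 0 := hs0.ne'
    have hses : ∀ A B : ℝ, (A * (2*s) - B * -(2*s)) / s = 2*(A+B) := by
      intro A B; field_simp; ring
    have h4 := h3.congr_deriv (g' := 2 * (Real.exp (-s^2) * (Real.exp (2*u*s) + Real.exp (-(2*u*s)))))
      (by simp only [Pi.neg_apply]; rw [hses]; ring)
    refine h4.congr_of_eventuallyEq (Eventually.of_forall fun y => ?_)
    simp only [Pi.sub_apply, Pi.neg_apply]; ring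

lemma Jfun_eq (x : ℝ) :
    Jfun x = 2 * Real.sqrt π * ∫ t in (0:ℝ)..x, Real.exp (t^2) := by
  have hcont : Continuous fun t : ℝ => Real.exp (t^2) := by fun_prop
  have hD : ∀ u : ℝ, HasDerivAt
      (fun v => Jfun v - 2 * Real.sqrt π * ∫ t in (0:ℝ)..v, Real.exp (t^2)) 0 u := by
    intro u
    have h1 := Jfun_hasDeriv u
    have h2 : HasDerivAt (fun v => ∫ t in (0:ℝ)..v, Real.exp (t^2)) (Real.exp (u^2)) u :=
      (hcont.integral_hasStrictDerivAt 0 u).hasDerivAt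
    have h3 := h1.sub (h2.const_mul (2 * Real.sqrt π))
    exact h3.congr_deriv (by ring)
  have hconst := is_const_of_deriv_eq_zero (fun u => (hD u).differentiableAt)
    (fun u => (hD u).deriv) x 0
  have h0 : Jfun 0 = 0 := by simp [Jfun]
  rw [h0] at hconst
  simp at hconst
  linarith [hconst]

lemma integrable_gauss_shift (a : ℝ) :
    Integrable (fun s : ℝ => Real.exp (-(a-s)^2)) := by
  have h := (integrable_exp_neg_mul_sq (b:=1) one_pos).comp_sub_right a
  have e : (fun s : ℝ => Real.exp (-(a-s)^2)) = fun s => Real.exp (-1*(s-a)^2) := by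
    funext s; congr 1; ring
  rw [e]; exact h

lemma integrable_gauss_shift' (a : ℝ) :
    Integrable (fun s : ℝ => Real.exp (-(a+s)^2)) := by
  have h := (integrable_exp_neg_mul_sq (b:=1) one_pos).comp_add_right a
  have e : (fun s : ℝ => Real.exp (-(a+s)^2)) = fun s => Real.exp (-1*(s+a)^2) := by
    funext s; congr 1; ring
  rw [e]
  simpa [add_comm] using h

lemma Lfun_eq (x : ℝ) {y : ℝ} (hy : 0 < y) :
    Lfun x y = (1/π) * ∫ s in Ioi (0:ℝ),
      s * (Real.exp (-(x-s)^2) - Real.exp (-(x+s)^2)) / (y^2 + s^2) := by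
  set g : ℝ → ℝ := fun s => s * Real.exp (-(x - s)^2) / (y^2 + s^2) with hg_def
  have hg : Integrable g := by
    apply Integrable.mono' (g := fun s => (1/(2*y)) * Real.exp (-(x-s)^2))
      ((integrable_gauss_shift x).const_mul _)
    · apply Measurable.aestronglyMeasurable; fun_prop
    · refine Eventually.of_forall fun s => ?_
      have hden : (0:ℝ) < y^2 + s^2 := by positivity
      rw [Real.norm_eq_abs, hg_def, abs_div, abs_mul, abs_of_nonneg hden.le,
        abs_of_nonneg (Real.exp_pos _).le, div_le_iff₀ hden]
      have key : |s| * (2*y) ≤ y^2 + s^2 := by nlinarith [sq_nonneg (y - |s|), sq_abs s]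
      have hexp := (Real.exp_pos (-(x-s)^2)).le
      have h2y : (0:ℝ) < 2*y := by linarith
      calc |s| * Real.exp (-(x-s)^2) ≤ ((y^2+s^2)/(2*y)) * Real.exp (-(x-s)^2) := by
            apply mul_le_mul_of_nonneg_right _ hexp
            rw [le_div_iff₀ h2y]; linarith [key]
        _ = 1/(2*y) * Real.exp (-(x-s)^2) * (y^2+s^2) := by ring
  have h1 : (fun t : ℝ => (x - t) * Real.exp (-t ^ 2) / (y ^ 2 + (x - t) ^ 2))
      = fun t => g (x - t) := by
    funext t; rw [hg_def]; simp [sub_sub_cancel]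
  have h2 : ∀ s : ℝ, g s + g (-s)
      = s * (Real.exp (-(x-s)^2) - Real.exp (-(x+s)^2)) / (y^2 + s^2) := by
    intro s
    rw [hg_def]
    simp only [neg_sq, sub_neg_eq_add]
    ring
  rw [Lfun, h1, integral_sub_left_eq_self g volume x, fold_integral g hg]
  congr 1
  exact setIntegral_congr_fun measurableSet_Ioi fun s _ => h2 s

lemma gauss_deriv (u : ℝ) :
    HasDerivAt (fun u : ℝ => Real.exp (-u^2)) (Real.exp (-u^2) * -(2*u)) u := by
  have h := ((hasDerivAt_pow 2 u).neg).exp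
  simpa using h

lemma gauss_lipschitz : LipschitzWith 1 (fun u : ℝ => Real.exp (-u^2)) := by
  apply lipschitzWith_of_nnnorm_deriv_le
  · intro u; exact (gauss_deriv u).differentiableAt
  · intro u
    rw [(gauss_deriv u).deriv, ← NNReal.coe_le_coe, coe_nnnorm, NNReal.coe_one,
      Real.norm_eq_abs, abs_mul, abs_of_nonneg (Real.exp_pos _).le, abs_neg]
    have h1 : u^2 + 1 ≤ Real.exp (u^2) := by
      have := Real.add_one_le_exp (u^2); linarith
    have h2 : |2*u| ≤ u^2 + 1 := by
      rw [abs_mul, abs_two]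
      nlinarith [sq_nonneg (|u| - 1), sq_abs u, abs_nonneg u]
    have h3 : Real.exp (-u^2) * Real.exp (u^2) = 1 := by
      rw [← Real.exp_add]; simp
    nlinarith [Real.exp_pos (-u^2), Real.exp_pos (u^2), abs_nonneg (2*u)]

lemma gauss_diff_le (a b : ℝ) :
    |Real.exp (-a^2) - Real.exp (-b^2)| ≤ |a - b| := by
  have := gauss_lipschitz.dist_le_mul a b
  simpa [Real.dist_eq] using this

lemma tendsto_inner (x : ℝ) :
    Tendsto (fun y : ℝ => ∫ s in Ioi (0:ℝ),
        s * (Real.exp (-(x-s)^2) - Real.exp (-(x+s)^2)) / (y^2 + s^2)) (𝓝[>] (0:ℝ))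
      (𝓝 (∫ s in Ioi (0:ℝ), (Real.exp (-(x-s)^2) - Real.exp (-(x+s)^2)) / s)) := by
  apply tendsto_integral_filter_of_dominated_convergence
    (bound := fun s => min 2 ((Real.exp (-(x-s)^2) + Real.exp (-(x+s)^2)) / s))
  · refine Eventually.of_forall fun y => ?_
    apply Measurable.aestronglyMeasurable; fun_prop
  · filter_upwards [self_mem_nhdsWithin] with y (hy : (0:ℝ) < y)
    filter_upwards [ae_restrict_mem measurableSet_Ioi] with s (hs : (0:ℝ) < s)
    have hden : (0:ℝ) < y^2 + s^2 := by positivity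
    set A := Real.exp (-(x-s)^2) with hA
    set B := Real.exp (-(x+s)^2) with hB
    have hA0 : 0 < A := Real.exp_pos _
    have hB0 : 0 < B := Real.exp_pos _
    have habs : ‖s * (A - B) / (y^2 + s^2)‖ = s * |A - B| / (y^2 + s^2) := by
      rw [Real.norm_eq_abs, abs_div, abs_mul, abs_of_nonneg hs.le, abs_of_nonneg hden.le]
    rw [habs, le_min_iff]
    constructor
    · have hd : |A - B| ≤ 2 * s := by
        have := gauss_diff_le (x - s) (x + s)
        have he : |(x - s) - (x + s)| = 2 * s := by
          rw [show (x - s) - (x + s) = -(2*s) by ring, abs_neg,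
            abs_of_nonneg (by linarith : (0:ℝ) ≤ 2*s)]
        rw [he] at this
        simpa [hA, hB] using this
      rw [div_le_iff₀ hden]
      nlinarith [sq_nonneg s, sq_nonneg y, mul_le_mul_of_nonneg_left hd hs.le]
    · have h1 : |A - B| ≤ A + B := by
        rw [abs_sub_le_iff]; constructor <;> linarith
      rw [div_le_div_iff₀ hden (by positivity : (0:ℝ) < s)]
      have h2 : s * |A - B| * s ≤ s * (A + B) * s := by nlinarith
      nlinarith [mul_le_mul_of_nonneg_left h1 (mul_pos hs hs).le, sq_nonneg y,
        mul_nonneg (mul_nonneg hA0.le hs.le) hs.le, mul_pos hA0 hB0,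
        mul_nonneg (add_pos hA0 hB0).le (sq_nonneg y)]
  · -- integrability of the bound
    apply Integrable.mono'
      (g := fun s : ℝ => Set.indicator (Ioc (0:ℝ) 1) (fun _ => (2:ℝ)) s
        + (Real.exp (-(x-s)^2) + Real.exp (-(x+s)^2)))
    · apply Integrable.add
      · apply Integrable.integrableOn
        apply (integrable_indicator_iff (measurableSet_Ioc)).2
        exact integrableOn_const (by simp [Real.volume_Ioc])
      · exact ((integrable_gauss_shift x).add (integrable_gauss_shift' x)).integrableOn
    · apply Measurable.aestronglyMeasurable; fun_prop
    · filter_upwards [ae_restrict_mem measurableSet_Ioi] with s (hs : (0:ℝ) < s)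
      have hA0 : 0 < Real.exp (-(x-s)^2) := Real.exp_pos _
      have hB0 : 0 < Real.exp (-(x+s)^2) := Real.exp_pos _
      have hnn : 0 ≤ min 2 ((Real.exp (-(x-s)^2) + Real.exp (-(x+s)^2)) / s) := by
        apply le_min (by norm_num)
        positivity
      rw [Real.norm_eq_abs, abs_of_nonneg hnn]
      rcases le_or_gt s 1 with hs1 | hs1
      · have : Set.indicator (Ioc (0:ℝ) 1) (fun _ => (2:ℝ)) s = 2 := by
          exact Set.indicator_of_mem (Set.mem_Ioc.2 ⟨hs, hs1⟩) _
        rw [this]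
        have := min_le_left 2 ((Real.exp (-(x-s)^2) + Real.exp (-(x+s)^2)) / s)
        linarith [add_pos hA0 hB0]
      · have : Set.indicator (Ioc (0:ℝ) 1) (fun _ => (2:ℝ)) s = 0 := by
          rw [Set.indicator_of_notMem (by simp [hs1.not_ge])]
        rw [this, zero_add]
        refine le_trans (min_le_right _ _) ?_
        rw [div_le_iff₀ (by positivity : (0:ℝ) < s)]
        nlinarith [add_pos hA0 hB0]
  · -- pointwise convergence
    filter_upwards [ae_restrict_mem measurableSet_Ioi] with s (hs : (0:ℝ) < s)
    have hc : ContinuousAt (fun y : ℝ =>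
        s * (Real.exp (-(x-s)^2) - Real.exp (-(x+s)^2)) / (y^2 + s^2)) 0 := by
      apply ContinuousAt.div continuousAt_const (by fun_prop)
      positivity
    have hval : s * (Real.exp (-(x-s)^2) - Real.exp (-(x+s)^2)) / ((0:ℝ)^2 + s^2)
        = (Real.exp (-(x-s)^2) - Real.exp (-(x+s)^2)) / s := by
      rw [show (0:ℝ)^2 + s^2 = s * s by ring]
      rw [div_eq_div_iff (by positivity) hs.ne']
      ring
    have h := hc.tendsto.mono_left (nhdsWithin_le_nhds (s := Ioi (0:ℝ)))
    rwa [hval] at h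

theorem Lfun_tendsto_dawson (x : ℝ) :
    Tendsto (fun y : ℝ => Lfun x y) (𝓝[>] 0) (𝓝 ((2 / Real.sqrt π) * dawsonReal x)) := by
  have hK : (∫ s in Ioi (0:ℝ), (Real.exp (-(x-s)^2) - Real.exp (-(x+s)^2)) / s)
      = Real.exp (-x^2) * Jfun x := by
    rw [Jfun, ← integral_const_mul]
    refine setIntegral_congr_fun measurableSet_Ioi fun s _ => ?_
    have e1 : -(x-s)^2 = -x^2 + (-s^2 + 2*x*s) := by ring
    have e2 : -(x+s)^2 = -x^2 + (-s^2 + -(2*x*s)) := by ring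
    rw [e1, e2]
    simp [Real.exp_add]
    ring
  have hlim := (tendsto_inner x).const_mul (1/π)
  rw [hK, Jfun_eq] at hlim
  have hfe : (fun y : ℝ => (1/π) * ∫ s in Ioi (0:ℝ),
      s * (Real.exp (-(x-s)^2) - Real.exp (-(x+s)^2)) / (y^2 + s^2))
      =ᶠ[𝓝[>] (0:ℝ)] fun y => Lfun x y := by
    filter_upwards [self_mem_nhdsWithin] with y hy
    exact (Lfun_eq x hy).symm
  have hmain := Tendsto.congr' hfe hlim
  convert hmain using 2
  rw [dawsonReal]
  have hπ0 : (0:ℝ) < π := pi_pos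
  have hsq : Real.sqrt π * Real.sqrt π = π := Real.mul_self_sqrt hπ0.le
  have hs0 : Real.sqrt π ≠ 0 := by positivity
  field_simp
  linear_combination (-(∫ t in (0:ℝ)..x, Real.exp (t^2))) * hsq
end

section
/- Let x ∈ ℝ, y > 0, ς > 0, α ∈ ℝ, γ ∈ ℝ and β > 0, and set ỹ = y + ς/2 (so ỹ > y > 0). Then (1/(2π)) · ∫_{−∞}^{∞} [(x − t)/(y² + (x − t)²)] · [ (α − i·γ·(t + i·ς/2)) / (β − (t + i·ς/2)²) + (α − i·γ·(−t + i·ς/2)) / (β − (−t + i·ς/2)²) ] dt = x·[2·α·(y + ς/2) + γ·(x² + (y + ς/2)² − β)] / [β² + 2·β·((y + ς/2)² − x²) + (x² + (y + ς/2)²)²], where i is the imaginary unit, the integral of the complex-valued integrand is taken over t ∈ ℝ, and the left-hand side is real. -/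
open Real MeasureTheory Filter Topology

noncomputable def fInt (x y s b α γ : ℝ) (t : ℝ) : ℝ :=
  (x - t) / ((t - x) ^ 2 + y ^ 2) *
    ((γ * s + α * (b - t) / b) / ((t - b) ^ 2 + s ^ 2) +
     (γ * s + α * (b + t) / b) / ((t + b) ^ 2 + s ^ 2))

noncomputable def Vval (x y s b α γ : ℝ) : ℝ :=
  x * (2 * α * (y + s) + γ * (x ^ 2 + (y + s) ^ 2 - b ^ 2)) /
    ((b ^ 2) ^ 2 + 2 * b ^ 2 * ((y + s) ^ 2 - x ^ 2) + (x ^ 2 + (y + s) ^ 2) ^ 2)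

noncomputable def cA (u y s a g : ℝ) : ℝ :=
  -((g*s - a*u)*(u^2-y^2+s^2) + (-(a*y))*(2*u*y)) / ((u^2 - y^2 + s^2)^2 + 4*u^2*y^2)
noncomputable def cC (u y s a g : ℝ) : ℝ :=
  ((-(a*y))*(u^2-y^2+s^2) - (g*s - a*u)*(2*u*y)) / ((u^2 - y^2 + s^2)^2 + 4*u^2*y^2)
noncomputable def cB (u y s a g : ℝ) : ℝ :=
  2*((u*(y^2+u^2+s^2))*(-a/2) - (s*(u^2+s^2-y^2))*(-g/2)) / ((y^2 + u^2 - s^2)^2 + 4*u^2*s^2)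
noncomputable def cE (u y s a g : ℝ) : ℝ :=
  -2*((u*(y^2+u^2+s^2))*(-g/2) + (s*(u^2+s^2-y^2))*(-a/2)) / ((y^2 + u^2 - s^2)^2 + 4*u^2*s^2)

lemma sq_pos_of_ne' {u : ℝ} (hu : u ≠ 0) : 0 < u ^ 2 :=
  lt_of_le_of_ne (sq_nonneg u) (Ne.symm (pow_ne_zero 2 hu))

lemma quadpos (u : ℝ) {d e : ℝ} (hd : 0 < d) (he : 0 < e) (h : d ≠ e) :
    0 < (u ^ 2 - d ^ 2 + e ^ 2) ^ 2 + 4 * u ^ 2 * d ^ 2 := by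
  rcases eq_or_ne u 0 with hu | hu
  · subst hu
    have h2 : e ^ 2 - d ^ 2 ≠ 0 := by
      intro hc
      have h3 : (e - d) * (e + d) = 0 := by linear_combination hc
      rcases mul_eq_zero.mp h3 with h4 | h4
      · exact h (by linarith)
      · linarith
    have h5 : 0 < (e ^ 2 - d ^ 2) ^ 2 := sq_pos_of_ne' h2
    nlinarith [h5]
  · have h6 : 0 < u ^ 2 := sq_pos_of_ne' hu
    nlinarith [sq_nonneg (u ^ 2 - d ^ 2 + e ^ 2), mul_pos h6 (mul_pos hd hd)]

lemma Vden_pos {b yt : ℝ} (hb : 0 < b) (hyt : 0 < yt) (x : ℝ) :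
    0 < (b ^ 2) ^ 2 + 2 * b ^ 2 * (yt ^ 2 - x ^ 2) + (x ^ 2 + yt ^ 2) ^ 2 := by
  rcases eq_or_ne x 0 with hx | hx
  · subst hx
    nlinarith [mul_pos (mul_pos hb hb) (mul_pos hb hb),
      mul_pos (mul_pos hyt hyt) (mul_pos hyt hyt),
      mul_pos (mul_pos hb hb) (mul_pos hyt hyt)]
  · have h1 : 0 < x ^ 2 := sq_pos_of_ne' hx
    nlinarith [sq_nonneg (b ^ 2 + yt ^ 2 - x ^ 2), mul_pos h1 (mul_pos hyt hyt)]

set_option maxHeartbeats 2000000 in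
lemma T2red (u w y s a g : ℝ)
    (hQ1 : (w-u)^2 + y^2 ≠ 0) (hQ2 : w^2 + s^2 ≠ 0)
    (hD2 : (u^2 - y^2 + s^2)^2 + 4*u^2*y^2 ≠ 0)
    (hDp : (y^2 + u^2 - s^2)^2 + 4*u^2*s^2 ≠ 0) :
    (u - w)/((w-u)^2+y^2) * ((g*s - a*w)/(w^2+s^2))
      = (cA u y s a g * (w-u) + cC u y s a g * y)/((w-u)^2+y^2)
        + (cB u y s a g * w + cE u y s a g * s)/(w^2+s^2) := by
  unfold cA cC cB cE
  generalize hD : (u^2 - y^2 + s^2)^2 + 4*u^2*y^2 = D at hD2 ⊢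
  generalize hE : (y^2 + u^2 - s^2)^2 + 4*u^2*s^2 = E at hDp ⊢
  field_simp
  subst hD hE
  ring

set_option maxHeartbeats 1000000 in
lemma Asumred (u y s a g : ℝ)
    (hD2 : (u^2 - y^2 + s^2)^2 + 4*u^2*y^2 ≠ 0)
    (hDp : (y^2 + u^2 - s^2)^2 + 4*u^2*s^2 ≠ 0) :
    cA u y s a g + cB u y s a g = 0 := by
  unfold cA cB
  field_simp
  ring

set_option maxHeartbeats 8000000 in
lemma Csumred (u v y s a g : ℝ)
    (hD2u : (u^2 - y^2 + s^2)^2 + 4*u^2*y^2 ≠ 0)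
    (hDpu : (y^2 + u^2 - s^2)^2 + 4*u^2*s^2 ≠ 0)
    (hD2v : (v^2 - y^2 + s^2)^2 + 4*v^2*y^2 ≠ 0)
    (hDpv : (y^2 + v^2 - s^2)^2 + 4*v^2*s^2 ≠ 0)
    (hW : ((y+s)^2 - u*v)^2 + (u+v)^2*(y+s)^2 ≠ 0) :
    cC u y s a g + cE u y s a g + cC v y s (-a) g + cE v y s (-a) g
      = 2 * ((a*(y+s)*(v^2-u^2)/2 + g*(u+v)*(u*v+(y+s)^2)/2)
          / (((y+s)^2 - u*v)^2 + (u+v)^2*(y+s)^2)) := by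
  unfold cC cE
  generalize hD : (u^2 - y^2 + s^2)^2 + 4*u^2*y^2 = D at hD2u ⊢
  generalize hE : (y^2 + u^2 - s^2)^2 + 4*u^2*s^2 = E at hDpu ⊢
  generalize hD' : (v^2 - y^2 + s^2)^2 + 4*v^2*y^2 = D' at hD2v ⊢
  generalize hE' : (y^2 + v^2 - s^2)^2 + 4*v^2*s^2 = E' at hDpv ⊢
  generalize hW' : ((y+s)^2 - u*v)^2 + (u+v)^2*(y+s)^2 = W at hW ⊢
  field_simp
  subst hD hE hD' hE' hW'
  ring


lemma hasDerivAt_log_quad (c : ℝ) {d : ℝ} (hd : 0 < d) (t : ℝ) :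
    HasDerivAt (fun τ : ℝ => Real.log ((τ - c) ^ 2 + d ^ 2))
      (2 * (t - c) / ((t - c) ^ 2 + d ^ 2)) t := by
  have h1 : HasDerivAt (fun τ : ℝ => (τ - c) ^ 2 + d ^ 2) (2 * (t - c)) t := by
    have := (((hasDerivAt_id t).sub_const c).pow 2).add_const (d ^ 2)
    simpa using this
  simpa using h1.log (by positivity)

lemma hasDerivAt_arctan_quad (c : ℝ) {d : ℝ} (hd : 0 < d) (t : ℝ) :
    HasDerivAt (fun τ : ℝ => Real.arctan ((τ - c) / d))
      (d / ((t - c) ^ 2 + d ^ 2)) t := by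
  have h1 : HasDerivAt (fun τ : ℝ => (τ - c) / d) (1 / d) t := by
    have := ((hasDerivAt_id t).sub_const c).div_const d
    simpa using this
  have h2 := (Real.hasDerivAt_arctan ((t - c) / d)).comp t h1
  have h3 : (Real.arctan ∘ fun τ : ℝ => (τ - c) / d) = fun τ : ℝ => Real.arctan ((τ - c) / d) := rfl
  rw [h3] at h2
  refine h2.congr_deriv ?_
  have hd' : d ≠ 0 := hd.ne'
  have hq : (t - c) ^ 2 + d ^ 2 ≠ 0 := by positivity
  field_simp
  ring

lemma integrable_one_div_quad (c : ℝ) {d : ℝ} (hd : 0 < d) :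
    Integrable (fun t : ℝ => ((t - c) ^ 2 + d ^ 2)⁻¹) := by
  have h1 : Integrable (fun t : ℝ => (1 + (t * d⁻¹) ^ 2)⁻¹) :=
    integrable_inv_one_add_sq.comp_mul_right' (inv_ne_zero hd.ne')
  have h2 := (h1.comp_sub_right c).const_mul ((d ^ 2)⁻¹)
  refine h2.congr (Filter.Eventually.of_forall fun t => ?_)
  have hd' : d ≠ 0 := hd.ne'
  have hq : (t - c) ^ 2 + d ^ 2 ≠ 0 := by positivity
  field_simp
  ring

lemma log_ratio_top (e d : ℝ) :
    Tendsto (fun t : ℝ => Real.log (((t + e) ^ 2 + d ^ 2) / t ^ 2)) atTop (𝓝 0) := by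
  have base : Tendsto (fun t : ℝ => t⁻¹) atTop (𝓝 0) := tendsto_inv_atTop_zero
  have h2 : Tendsto (fun t : ℝ => (1 + e * t⁻¹) ^ 2 + (d * t⁻¹) ^ 2) atTop
      (𝓝 ((1 + e * 0) ^ 2 + (d * 0) ^ 2)) :=
    ((tendsto_const_nhds.add (base.const_mul e)).pow 2).add ((base.const_mul d).pow 2)
  norm_num at h2
  have h3 : Tendsto (fun t : ℝ => ((t + e) ^ 2 + d ^ 2) / t ^ 2) atTop (𝓝 1) := by
    apply h2.congr'
    filter_upwards [eventually_ne_atTop (0 : ℝ)] with t ht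
    field_simp
    try ring
  simpa using h3.log one_ne_zero

lemma log_ratio_bot (e d : ℝ) :
    Tendsto (fun t : ℝ => Real.log (((t + e) ^ 2 + d ^ 2) / t ^ 2)) atBot (𝓝 0) := by
  have h1 := (log_ratio_top (-e) d).comp tendsto_neg_atBot_atTop
  apply h1.congr
  intro t
  simp only [Function.comp_apply]
  congr 1
  ring

lemma arctan_quad_top (c : ℝ) {d : ℝ} (hd : 0 < d) :
    Tendsto (fun t : ℝ => Real.arctan ((t - c) / d)) atTop (𝓝 (π / 2)) := by
  have inner : Tendsto (fun t : ℝ => (t - c) / d) atTop atTop := by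
    apply Tendsto.atTop_div_const hd
    simpa [sub_eq_add_neg] using tendsto_atTop_add_const_right atTop (-c) tendsto_id
  exact (tendsto_nhds_of_tendsto_nhdsWithin Real.tendsto_arctan_atTop).comp inner

lemma arctan_quad_bot (c : ℝ) {d : ℝ} (hd : 0 < d) :
    Tendsto (fun t : ℝ => Real.arctan ((t - c) / d)) atBot (𝓝 (-(π / 2))) := by
  have inner : Tendsto (fun t : ℝ => (t - c) / d) atBot atBot := by
    apply Tendsto.atBot_div_const hd
    simpa [sub_eq_add_neg] using tendsto_atBot_add_const_right atBot (-c) tendsto_id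
  exact (tendsto_nhds_of_tendsto_nhdsWithin Real.tendsto_arctan_atBot).comp inner



noncomputable def CbV (s b α γ : ℝ) : ℝ :=
  |2 * (γ * s - α)| / 2 + |2 * (α + γ * s) * (b ^ 2 + s ^ 2)| / (2 * (b ^ 2 + s ^ 2))

lemma CbV_nonneg (s b α γ : ℝ) : 0 ≤ CbV s b α γ := by
  unfold CbV; positivity

lemma fInt_bound (x : ℝ) {y s b : ℝ} (α γ : ℝ) (hy : 0 < y) (hs : 0 < s) (hb : 0 < b)
    (t : ℝ) :
    ‖fInt x y s b α γ t‖ ≤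
      CbV s b α γ / (2 * y) * ((((t - b) ^ 2 + s ^ 2))⁻¹ + (((t + b) ^ 2 + s ^ 2))⁻¹) := by
  have hQ1 : (0:ℝ) < (t - x) ^ 2 + y ^ 2 := by positivity
  have hQ2 : (0:ℝ) < (t - b) ^ 2 + s ^ 2 := by positivity
  have hQ3 : (0:ℝ) < (t + b) ^ 2 + s ^ 2 := by positivity
  have hbs : (0:ℝ) < b ^ 2 + s ^ 2 := by positivity
  have hkey : fInt x y s b α γ t =
      (x - t) * (2 * (γ * s - α) * t ^ 2 + 2 * (α + γ * s) * (b ^ 2 + s ^ 2)) /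
        (((t - x) ^ 2 + y ^ 2) * (((t - b) ^ 2 + s ^ 2) * ((t + b) ^ 2 + s ^ 2))) := by
    unfold fInt
    field_simp
    ring
  have hA : |2 * (γ * s - α)| ≤ 2 * CbV s b α γ := by
    have h0 : 0 ≤ |2 * (α + γ * s) * (b ^ 2 + s ^ 2)| / (2 * (b ^ 2 + s ^ 2)) := by positivity
    unfold CbV
    linarith
  have hB : |2 * (α + γ * s) * (b ^ 2 + s ^ 2)| ≤ 2 * CbV s b α γ * (b ^ 2 + s ^ 2) := by
    have h1 : 2 * CbV s b α γ * (b ^ 2 + s ^ 2)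
        = |2 * (γ * s - α)| * (b ^ 2 + s ^ 2) + |2 * (α + γ * s) * (b ^ 2 + s ^ 2)| := by
      unfold CbV
      field_simp
    nlinarith [mul_nonneg (abs_nonneg (2 * (γ * s - α))) hbs.le]
  have hN : |2 * (γ * s - α) * t ^ 2 + 2 * (α + γ * s) * (b ^ 2 + s ^ 2)| ≤
      CbV s b α γ * (((t - b) ^ 2 + s ^ 2) + ((t + b) ^ 2 + s ^ 2)) := by
    have h2 := abs_add_le (2 * (γ * s - α) * t ^ 2) (2 * (α + γ * s) * (b ^ 2 + s ^ 2))
    have h3 : |2 * (γ * s - α) * t ^ 2| = |2 * (γ * s - α)| * t ^ 2 := by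
      rw [abs_mul, abs_of_nonneg (sq_nonneg t)]
    nlinarith [mul_le_mul_of_nonneg_right hA (sq_nonneg t)]
  rw [hkey, Real.norm_eq_abs, abs_div, abs_mul]
  rw [abs_of_pos (by positivity : (0:ℝ) < ((t - x) ^ 2 + y ^ 2) * (((t - b) ^ 2 + s ^ 2) * ((t + b) ^ 2 + s ^ 2)))]
  rw [← div_mul_div_comm]
  have h1 : |x - t| / ((t - x) ^ 2 + y ^ 2) ≤ 1 / (2 * y) := by
    rw [div_le_div_iff₀ hQ1 (by positivity)]
    have h4 : |x - t| ^ 2 = (t - x) ^ 2 := by rw [sq_abs]; ring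
    nlinarith [sq_nonneg (|x - t| - y), abs_nonneg (x - t)]
  have h2 : |2 * (γ * s - α) * t ^ 2 + 2 * (α + γ * s) * (b ^ 2 + s ^ 2)| /
      (((t - b) ^ 2 + s ^ 2) * ((t + b) ^ 2 + s ^ 2))
      ≤ CbV s b α γ * (((t - b) ^ 2 + s ^ 2) + ((t + b) ^ 2 + s ^ 2)) /
        (((t - b) ^ 2 + s ^ 2) * ((t + b) ^ 2 + s ^ 2)) := by
    exact (div_le_div_iff_of_pos_right (by positivity)).mpr hN
  calc (|x - t| / ((t - x) ^ 2 + y ^ 2)) *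
        (|2 * (γ * s - α) * t ^ 2 + 2 * (α + γ * s) * (b ^ 2 + s ^ 2)| /
          (((t - b) ^ 2 + s ^ 2) * ((t + b) ^ 2 + s ^ 2)))
      ≤ (1 / (2 * y)) * (CbV s b α γ * (((t - b) ^ 2 + s ^ 2) + ((t + b) ^ 2 + s ^ 2)) /
          (((t - b) ^ 2 + s ^ 2) * ((t + b) ^ 2 + s ^ 2))) := by
        apply mul_le_mul h1 h2 (by positivity) (by positivity)
    _ = CbV s b α γ / (2 * y) * ((((t - b) ^ 2 + s ^ 2))⁻¹ + (((t + b) ^ 2 + s ^ 2))⁻¹) := by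
        rw [inv_add_inv hQ2.ne' hQ3.ne']
        ring

lemma continuous_fInt (x : ℝ) {y s : ℝ} (b α γ : ℝ) (hy : 0 < y) (hs : 0 < s) :
    Continuous (fInt x y s b α γ) := by
  unfold fInt
  apply Continuous.mul
  · exact Continuous.div (by continuity) (by continuity) (fun t => by positivity)
  · exact (Continuous.div (by continuity) (by continuity) (fun t => by positivity)).add
      (Continuous.div (by continuity) (by continuity) (fun t => by positivity))

lemma integrable_fInt (x : ℝ) {y s b : ℝ} (α γ : ℝ) (hy : 0 < y) (hs : 0 < s) (hb : 0 < b) :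
    Integrable (fInt x y s b α γ) := by
  have hg : Integrable (fun t : ℝ =>
      CbV s b α γ / (2 * y) * ((((t - b) ^ 2 + s ^ 2))⁻¹ + (((t + b) ^ 2 + s ^ 2))⁻¹)) := by
    apply Integrable.const_mul
    apply (integrable_one_div_quad b hs).add
    have := integrable_one_div_quad (-b) hs
    refine this.congr (Filter.Eventually.of_forall fun t => ?_)
    simp [sub_neg_eq_add]
  exact Integrable.mono' hg (continuous_fInt x b α γ hy hs).aestronglyMeasurable
    (Filter.Eventually.of_forall (fInt_bound x α γ hy hs hb))
set_option maxHeartbeats 4000000 in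
lemma key_int (x : ℝ) {y s b : ℝ} (α γ : ℝ) (hy : 0 < y) (hs : 0 < s) (hb : 0 < b)
    (hys : y ≠ s) :
    ∫ t : ℝ, fInt x y s b α γ t = 2 * π * Vval x y s b α γ := by
  have hyt : 0 < y + s := by linarith
  have hD2u : (0:ℝ) < ((x-b)^2 - y^2 + s^2)^2 + 4*(x-b)^2*y^2 := quadpos (x-b) hy hs hys
  have hD2v : (0:ℝ) < ((x+b)^2 - y^2 + s^2)^2 + 4*(x+b)^2*y^2 := quadpos (x+b) hy hs hys
  have hDpu : (0:ℝ) < (y^2 + (x-b)^2 - s^2)^2 + 4*(x-b)^2*s^2 := by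
    have h := quadpos (x-b) hs hy (Ne.symm hys)
    have heq : (y^2 + (x-b)^2 - s^2)^2 + 4*(x-b)^2*s^2
        = ((x-b)^2 - s^2 + y^2)^2 + 4*(x-b)^2*s^2 := by ring
    rw [heq]; exact h
  have hDpv : (0:ℝ) < (y^2 + (x+b)^2 - s^2)^2 + 4*(x+b)^2*s^2 := by
    have h := quadpos (x+b) hs hy (Ne.symm hys)
    have heq : (y^2 + (x+b)^2 - s^2)^2 + 4*(x+b)^2*s^2
        = ((x+b)^2 - s^2 + y^2)^2 + 4*(x+b)^2*s^2 := by ring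
    rw [heq]; exact h
  have hVden : (0:ℝ) < (b^2)^2 + 2*b^2*((y+s)^2 - x^2) + (x^2+(y+s)^2)^2 := Vden_pos hb hyt x
  have hW : (0:ℝ) < ((y+s)^2 - (x-b)*(x+b))^2 + ((x-b)+(x+b))^2*(y+s)^2 := by
    have heq : ((y+s)^2 - (x-b)*(x+b))^2 + ((x-b)+(x+b))^2*(y+s)^2
        = (b^2)^2 + 2*b^2*((y+s)^2 - x^2) + (x^2+(y+s)^2)^2 := by ring
    rw [heq]; exact hVden
  set F : ℝ → ℝ := fun τ : ℝ =>
    ((((cA (x-b) y s (α/b) γ + cA (x+b) y s (-(α/b)) γ)/2) * Real.log ((τ - x)^2 + y^2)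
      + (cB (x-b) y s (α/b) γ/2) * Real.log ((τ - b)^2 + s^2))
      + (cB (x+b) y s (-(α/b)) γ/2) * Real.log ((τ + b)^2 + s^2))
    + (((cC (x-b) y s (α/b) γ + cC (x+b) y s (-(α/b)) γ) * Real.arctan ((τ - x)/y)
      + cE (x-b) y s (α/b) γ * Real.arctan ((τ - b)/s))
      + cE (x+b) y s (-(α/b)) γ * Real.arctan ((τ + b)/s)) with hF_def
  have hF : ∀ t : ℝ, HasDerivAt F (fInt x y s b α γ t) t := by
    intro t
    have e2 := T2red (x-b) (t-b) y s (α/b) γ (by positivity) (by positivity)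
      (ne_of_gt hD2u) (ne_of_gt hDpu)
    have e3 := T2red (x+b) (t+b) y s (-(α/b)) γ (by positivity) (by positivity)
      (ne_of_gt hD2v) (ne_of_gt hDpv)
    have d1 := (hasDerivAt_log_quad x hy t).const_mul
      ((cA (x-b) y s (α/b) γ + cA (x+b) y s (-(α/b)) γ)/2)
    have d2 := (hasDerivAt_log_quad b hs t).const_mul (cB (x-b) y s (α/b) γ/2)
    have d3 := (hasDerivAt_log_quad (-b) hs t).const_mul (cB (x+b) y s (-(α/b)) γ/2)
    simp only [sub_neg_eq_add] at d3
    have a1 := (hasDerivAt_arctan_quad x hy t).const_mul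
      (cC (x-b) y s (α/b) γ + cC (x+b) y s (-(α/b)) γ)
    have a2 := (hasDerivAt_arctan_quad b hs t).const_mul (cE (x-b) y s (α/b) γ)
    have a3 := (hasDerivAt_arctan_quad (-b) hs t).const_mul (cE (x+b) y s (-(α/b)) γ)
    simp only [sub_neg_eq_add] at a3
    have sum := ((d1.add d2).add d3).add ((a1.add a2).add a3)
    refine sum.congr_deriv (Eq.symm ?_)
    unfold fInt
    have hQ1 : ((t-x)^2 + y^2) ≠ 0 := by positivity
    have hQ2 : ((t-b)^2 + s^2) ≠ 0 := by positivity
    have hQ3 : ((t+b)^2 + s^2) ≠ 0 := by positivity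
    linear_combination e2 + e3
  have hAsum : (cA (x-b) y s (α/b) γ + cA (x+b) y s (-(α/b)) γ)/2
      + cB (x-b) y s (α/b) γ/2 + cB (x+b) y s (-(α/b)) γ/2 = 0 := by
    have s1 := Asumred (x-b) y s (α/b) γ (ne_of_gt hD2u) (ne_of_gt hDpu)
    have s2 := Asumred (x+b) y s (-(α/b)) γ (ne_of_gt hD2v) (ne_of_gt hDpv)
    linarith
  -- log part limits
  have l1t : Tendsto (fun τ : ℝ => Real.log (((τ - x)^2 + y^2)/τ^2)) atTop (𝓝 0) :=
    (log_ratio_top (-x) y).congr (fun τ => by rw [← sub_eq_add_neg])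
  have l2t : Tendsto (fun τ : ℝ => Real.log (((τ - b)^2 + s^2)/τ^2)) atTop (𝓝 0) :=
    (log_ratio_top (-b) s).congr (fun τ => by rw [← sub_eq_add_neg])
  have l3t : Tendsto (fun τ : ℝ => Real.log (((τ + b)^2 + s^2)/τ^2)) atTop (𝓝 0) :=
    log_ratio_top b s
  have l1b : Tendsto (fun τ : ℝ => Real.log (((τ - x)^2 + y^2)/τ^2)) atBot (𝓝 0) :=
    (log_ratio_bot (-x) y).congr (fun τ => by rw [← sub_eq_add_neg])
  have l2b : Tendsto (fun τ : ℝ => Real.log (((τ - b)^2 + s^2)/τ^2)) atBot (𝓝 0) :=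
    (log_ratio_bot (-b) s).congr (fun τ => by rw [← sub_eq_add_neg])
  have l3b : Tendsto (fun τ : ℝ => Real.log (((τ + b)^2 + s^2)/τ^2)) atBot (𝓝 0) :=
    log_ratio_bot b s
  have hlogTop : Tendsto (fun τ : ℝ =>
      (((cA (x-b) y s (α/b) γ + cA (x+b) y s (-(α/b)) γ)/2) * Real.log ((τ - x)^2 + y^2)
        + (cB (x-b) y s (α/b) γ/2) * Real.log ((τ - b)^2 + s^2))
        + (cB (x+b) y s (-(α/b)) γ/2) * Real.log ((τ + b)^2 + s^2)) atTop (𝓝 0) := by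
    have comb := ((l1t.const_mul ((cA (x-b) y s (α/b) γ + cA (x+b) y s (-(α/b)) γ)/2)).add
      (l2t.const_mul (cB (x-b) y s (α/b) γ/2))).add
      (l3t.const_mul (cB (x+b) y s (-(α/b)) γ/2))
    simp only [mul_zero, add_zero] at comb
    apply comb.congr'
    filter_upwards [eventually_ne_atTop (0 : ℝ)] with τ hτ
    have hτ2 : τ^2 ≠ 0 := pow_ne_zero 2 hτ
    rw [Real.log_div (by positivity) hτ2, Real.log_div (by positivity) hτ2,
      Real.log_div (by positivity) hτ2]
    linear_combination (-(Real.log (τ^2))) * hAsum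
  have hlogBot : Tendsto (fun τ : ℝ =>
      (((cA (x-b) y s (α/b) γ + cA (x+b) y s (-(α/b)) γ)/2) * Real.log ((τ - x)^2 + y^2)
        + (cB (x-b) y s (α/b) γ/2) * Real.log ((τ - b)^2 + s^2))
        + (cB (x+b) y s (-(α/b)) γ/2) * Real.log ((τ + b)^2 + s^2)) atBot (𝓝 0) := by
    have comb := ((l1b.const_mul ((cA (x-b) y s (α/b) γ + cA (x+b) y s (-(α/b)) γ)/2)).add
      (l2b.const_mul (cB (x-b) y s (α/b) γ/2))).add
      (l3b.const_mul (cB (x+b) y s (-(α/b)) γ/2))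
    simp only [mul_zero, add_zero] at comb
    apply comb.congr'
    filter_upwards [eventually_ne_atBot (0 : ℝ)] with τ hτ
    have hτ2 : τ^2 ≠ 0 := pow_ne_zero 2 hτ
    rw [Real.log_div (by positivity) hτ2, Real.log_div (by positivity) hτ2,
      Real.log_div (by positivity) hτ2]
    linear_combination (-(Real.log (τ^2))) * hAsum
  -- arctan limits
  have m1t := arctan_quad_top x hy
  have m2t := arctan_quad_top b hs
  have m3t : Tendsto (fun τ : ℝ => Real.arctan ((τ + b)/s)) atTop (𝓝 (π/2)) :=
    (arctan_quad_top (-b) hs).congr (fun τ => by rw [sub_neg_eq_add])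
  have m1b := arctan_quad_bot x hy
  have m2b := arctan_quad_bot b hs
  have m3b : Tendsto (fun τ : ℝ => Real.arctan ((τ + b)/s)) atBot (𝓝 (-(π/2))) :=
    (arctan_quad_bot (-b) hs).congr (fun τ => by rw [sub_neg_eq_add])
  have hTop : Tendsto F atTop (𝓝 (0 +
      (((cC (x-b) y s (α/b) γ + cC (x+b) y s (-(α/b)) γ) * (π/2)
        + cE (x-b) y s (α/b) γ * (π/2))
        + cE (x+b) y s (-(α/b)) γ * (π/2)))) := by
    exact hlogTop.add (((m1t.const_mul (cC (x-b) y s (α/b) γ + cC (x+b) y s (-(α/b)) γ)).add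
      (m2t.const_mul (cE (x-b) y s (α/b) γ))).add (m3t.const_mul (cE (x+b) y s (-(α/b)) γ)))
  have hBot : Tendsto F atBot (𝓝 (0 +
      (((cC (x-b) y s (α/b) γ + cC (x+b) y s (-(α/b)) γ) * (-(π/2))
        + cE (x-b) y s (α/b) γ * (-(π/2)))
        + cE (x+b) y s (-(α/b)) γ * (-(π/2))))) := by
    exact hlogBot.add (((m1b.const_mul (cC (x-b) y s (α/b) γ + cC (x+b) y s (-(α/b)) γ)).add
      (m2b.const_mul (cE (x-b) y s (α/b) γ))).add (m3b.const_mul (cE (x+b) y s (-(α/b)) γ)))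
  have hint := integrable_fInt x α γ hy hs hb
  have hres := MeasureTheory.integral_of_hasDerivAt_of_tendsto hF hint hBot hTop
  rw [hres]
  have hcs := Csumred (x-b) (x+b) y s (α/b) γ (ne_of_gt hD2u) (ne_of_gt hDpu)
    (ne_of_gt hD2v) (ne_of_gt hDpv) (ne_of_gt hW)
  have hbridge : 2*(((α/b)*(y+s)*((x+b)^2-(x-b)^2)/2 + γ*((x-b)+(x+b))*((x-b)*(x+b)+(y+s)^2)/2)
      / (((y+s)^2 - (x-b)*(x+b))^2 + ((x-b)+(x+b))^2*(y+s)^2)) = 2 * Vval x y s b α γ := by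
    unfold Vval
    congr 1
    rw [div_eq_div_iff (ne_of_gt hW) (ne_of_gt hVden)]
    field_simp
    ring
  linear_combination π * hcs + π * hbridge
lemma int_eq (x : ℝ) {y s b : ℝ} (α γ : ℝ) (hy : 0 < y) (hs : 0 < s) (hb : 0 < b) :
    ∫ t : ℝ, fInt x y s b α γ t = 2 * π * Vval x y s b α γ := by
  rcases ne_or_eq y s with hys | hys
  · exact key_int x α γ hy hs hb hys
  · subst hys
    have hL : ContinuousAt (fun r : ℝ => ∫ t : ℝ, fInt x r y b α γ t) y := by
      apply MeasureTheory.continuousAt_of_dominated (bound := fun t : ℝ =>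
        CbV y b α γ / y * ((((t - b) ^ 2 + y ^ 2))⁻¹ + (((t + b) ^ 2 + y ^ 2))⁻¹))
      · filter_upwards [eventually_gt_nhds hy] with r hr
        exact (continuous_fInt x b α γ hr hy).aestronglyMeasurable
      · filter_upwards [eventually_gt_nhds (half_lt_self hy)] with r hr
        apply Filter.Eventually.of_forall
        intro t
        have hr0 : 0 < r := lt_trans (by linarith) hr
        refine le_trans (fInt_bound x α γ hr0 hy hb t) ?_
        have h1 : CbV y b α γ / (2 * r) ≤ CbV y b α γ / y := by
          gcongr
          · exact CbV_nonneg y b α γ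
          · linarith
        exact mul_le_mul_of_nonneg_right h1 (by positivity)
      · apply Integrable.const_mul
        exact (integrable_one_div_quad b hy).add ((integrable_one_div_quad (-b) hy).congr
          (Filter.Eventually.of_forall fun t => by simp [sub_neg_eq_add]))
      · apply Filter.Eventually.of_forall
        intro t
        unfold fInt
        apply ContinuousAt.mul
        · apply ContinuousAt.div continuousAt_const
          · exact continuousAt_const.add ((continuousAt_id).pow 2)
          · positivity
        · exact continuousAt_const
    have hR : ContinuousAt (fun r : ℝ => 2 * π * Vval x r y b α γ) y := by
      apply ContinuousAt.mul continuousAt_const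
      unfold Vval
      apply ContinuousAt.div
      · fun_prop
      · fun_prop
      · exact ne_of_gt (Vden_pos hb (by linarith : (0:ℝ) < y + y) x)
    have hEq : (fun r : ℝ => ∫ t : ℝ, fInt x r y b α γ t)
        =ᶠ[𝓝[≠] y] (fun r : ℝ => 2 * π * Vval x r y b α γ) := by
      have h1 : ∀ᶠ r in 𝓝[≠] y, 0 < r :=
        Filter.Eventually.filter_mono nhdsWithin_le_nhds (eventually_gt_nhds hy)
      filter_upwards [h1, eventually_mem_nhdsWithin] with r hr0 hrs
      exact key_int x α γ hr0 hy hb hrs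
    have t1 : Tendsto (fun r : ℝ => ∫ t : ℝ, fInt x r y b α γ t) (𝓝[≠] y)
        (𝓝 (∫ t : ℝ, fInt x y y b α γ t)) := hL.continuousWithinAt
    have t2 : Tendsto (fun r : ℝ => ∫ t : ℝ, fInt x r y b α γ t) (𝓝[≠] y)
        (𝓝 (2 * π * Vval x y y b α γ)) :=
      Filter.Tendsto.congr' hEq.symm hR.continuousWithinAt
    exact tendsto_nhds_unique t1 t2
lemma ofReal_sub_I_ne {p q : ℝ} (hpq : 0 < p ^ 2 + q ^ 2) :
    ((p : ℂ) - (q : ℂ) * Complex.I) ≠ 0 := by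
  intro h
  have h1 := congrArg Complex.re h
  have h2 := congrArg Complex.im h
  simp [Complex.sub_re, Complex.sub_im, Complex.mul_re, Complex.mul_im,
    Complex.I_re, Complex.I_im, Complex.ofReal_re, Complex.ofReal_im] at h1 h2
  nlinarith

lemma ofReal_add_I_ne {p q : ℝ} (hpq : 0 < p ^ 2 + q ^ 2) :
    ((p : ℂ) + (q : ℂ) * Complex.I) ≠ 0 := by
  intro h
  have h1 := congrArg Complex.re h
  have h2 := congrArg Complex.im h
  simp [Complex.add_re, Complex.add_im, Complex.mul_re, Complex.mul_im,
    Complex.I_re, Complex.I_im, Complex.ofReal_re, Complex.ofReal_im] at h1 h2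
  nlinarith

set_option maxHeartbeats 2000000 in
lemma integrand_eq (x y ς α γ β : ℝ) (hy : 0 < y) (hς : 0 < ς) (b : ℝ) (hb : 0 < b)
    (hb2 : b ^ 2 = β) (t : ℝ) :
    (((x - t) / (y ^ 2 + (x - t) ^ 2) : ℝ) : ℂ) *
        (((α : ℂ) - Complex.I * (γ : ℂ) * ((t : ℂ) + Complex.I * (ς : ℂ) / 2)) /
            ((β : ℂ) - ((t : ℂ) + Complex.I * (ς : ℂ) / 2) ^ 2) +
          ((α : ℂ) - Complex.I * (γ : ℂ) * (-(t : ℂ) + Complex.I * (ς : ℂ) / 2)) /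
            ((β : ℂ) - (-(t : ℂ) + Complex.I * (ς : ℂ) / 2) ^ 2)) =
      ((fInt x y (ς / 2) b α γ t : ℝ) : ℂ) := by
  subst hb2
  have hs2 : (0:ℝ) < ς / 2 := by linarith
  have hdd : (0:ℝ) < (b ^ 2 + (ς/2) ^ 2 - t ^ 2) ^ 2 + (2 * (ς/2) * t) ^ 2 := by
    rcases eq_or_ne t 0 with ht | ht
    · subst ht
      have h1 : (0:ℝ) < b ^ 2 + (ς/2) ^ 2 - 0 ^ 2 := by norm_num; positivity
      nlinarith [mul_pos h1 h1, sq_nonneg (2 * (ς/2) * (0:ℝ))]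
    · have h2 : 2 * (ς/2) * t ≠ 0 := mul_ne_zero (by positivity) ht
      have h3 : 0 < (2 * (ς/2) * t) ^ 2 := sq_pos_of_ne' h2
      nlinarith [sq_nonneg (b ^ 2 + (ς/2) ^ 2 - t ^ 2)]
  have hD1ne : ((b ^ 2 + (ς/2) ^ 2 - t ^ 2 : ℝ) : ℂ) - ((2 * (ς/2) * t : ℝ) : ℂ) * Complex.I ≠ 0 :=
    ofReal_sub_I_ne hdd
  have hD2ne : ((b ^ 2 + (ς/2) ^ 2 - t ^ 2 : ℝ) : ℂ) + ((2 * (ς/2) * t : ℝ) : ℂ) * Complex.I ≠ 0 :=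
    ofReal_add_I_ne hdd
  have hD1 : (((b ^ 2 : ℝ)) : ℂ) - ((t : ℂ) + Complex.I * (ς : ℂ) / 2) ^ 2
      = ((b ^ 2 + (ς/2) ^ 2 - t ^ 2 : ℝ) : ℂ) - ((2 * (ς/2) * t : ℝ) : ℂ) * Complex.I := by
    push_cast
    linear_combination (-(ς:ℂ) ^ 2 / 4) * Complex.I_sq
  have hD2 : (((b ^ 2 : ℝ)) : ℂ) - (-(t : ℂ) + Complex.I * (ς : ℂ) / 2) ^ 2
      = ((b ^ 2 + (ς/2) ^ 2 - t ^ 2 : ℝ) : ℂ) + ((2 * (ς/2) * t : ℝ) : ℂ) * Complex.I := by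
    push_cast
    linear_combination (-(ς:ℂ) ^ 2 / 4) * Complex.I_sq
  have hN1 : (α : ℂ) - Complex.I * (γ : ℂ) * ((t : ℂ) + Complex.I * (ς : ℂ) / 2)
      = ((α + γ * (ς/2) : ℝ) : ℂ) - ((γ * t : ℝ) : ℂ) * Complex.I := by
    push_cast
    linear_combination (-(γ:ℂ) * (ς:ℂ) / 2) * Complex.I_sq
  have hN2 : (α : ℂ) - Complex.I * (γ : ℂ) * (-(t : ℂ) + Complex.I * (ς : ℂ) / 2)
      = ((α + γ * (ς/2) : ℝ) : ℂ) + ((γ * t : ℝ) : ℂ) * Complex.I := by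
    push_cast
    linear_combination (-(γ:ℂ) * (ς:ℂ) / 2) * Complex.I_sq
  rw [hN1, hN2, hD1, hD2, div_add_div _ _ hD1ne hD2ne]
  have hnum : (((α + γ * (ς/2) : ℝ) : ℂ) - ((γ * t : ℝ) : ℂ) * Complex.I) *
        (((b ^ 2 + (ς/2) ^ 2 - t ^ 2 : ℝ) : ℂ) + ((2 * (ς/2) * t : ℝ) : ℂ) * Complex.I)
      + (((b ^ 2 + (ς/2) ^ 2 - t ^ 2 : ℝ) : ℂ) - ((2 * (ς/2) * t : ℝ) : ℂ) * Complex.I) *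
        (((α + γ * (ς/2) : ℝ) : ℂ) + ((γ * t : ℝ) : ℂ) * Complex.I)
      = ((2 * ((α + γ * (ς/2)) * (b ^ 2 + (ς/2) ^ 2 - t ^ 2) + (γ * t) * (2 * (ς/2) * t)) : ℝ) : ℂ) := by
    push_cast
    linear_combination (-2 * (γ:ℂ) * (t:ℂ) * (2 * ((ς:ℂ)/2) * (t:ℂ))) * Complex.I_sq
  have hden : (((b ^ 2 + (ς/2) ^ 2 - t ^ 2 : ℝ) : ℂ) - ((2 * (ς/2) * t : ℝ) : ℂ) * Complex.I) *
        (((b ^ 2 + (ς/2) ^ 2 - t ^ 2 : ℝ) : ℂ) + ((2 * (ς/2) * t : ℝ) : ℂ) * Complex.I)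
      = (((b ^ 2 + (ς/2) ^ 2 - t ^ 2) ^ 2 + (2 * (ς/2) * t) ^ 2 : ℝ) : ℂ) := by
    push_cast
    linear_combination (-(2 * ((ς:ℂ)/2) * (t:ℂ)) ^ 2) * Complex.I_sq
  have hfact : (b ^ 2 + (ς/2) ^ 2 - t ^ 2) ^ 2 + (2 * (ς/2) * t) ^ 2
      = ((t - b) ^ 2 + (ς/2) ^ 2) * ((t + b) ^ 2 + (ς/2) ^ 2) := by ring
  rw [hnum, hden, hfact, ← Complex.ofReal_div, ← Complex.ofReal_mul, Complex.ofReal_inj]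
  unfold fInt
  have hQ1 : ((t - x) ^ 2 + y ^ 2) ≠ 0 := by positivity
  have hQ1' : (y ^ 2 + (x - t) ^ 2) ≠ 0 := by positivity
  have hQ2 : ((t - b) ^ 2 + (ς/2) ^ 2) ≠ 0 := by positivity
  have hQ3 : ((t + b) ^ 2 + (ς/2) ^ 2) ≠ 0 := by positivity
  field_simp
  ring
theorem residue_evaluation (x y ς α γ β : ℝ) (hy : 0 < y) (hς : 0 < ς) (hβ : 0 < β) :
    (1 / (2 * (π : ℂ))) *
        ∫ t : ℝ,
          (((x - t) / (y ^ 2 + (x - t) ^ 2) : ℝ) : ℂ) *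
            (((α : ℂ) - Complex.I * (γ : ℂ) * ((t : ℂ) + Complex.I * (ς : ℂ) / 2)) /
                ((β : ℂ) - ((t : ℂ) + Complex.I * (ς : ℂ) / 2) ^ 2) +
              ((α : ℂ) - Complex.I * (γ : ℂ) * (-(t : ℂ) + Complex.I * (ς : ℂ) / 2)) /
                ((β : ℂ) - (-(t : ℂ) + Complex.I * (ς : ℂ) / 2) ^ 2)) =
      ((x * (2 * α * (y + ς / 2) + γ * (x ^ 2 + (y + ς / 2) ^ 2 - β)) /
          (β ^ 2 + 2 * β * ((y + ς / 2) ^ 2 - x ^ 2) + (x ^ 2 + (y + ς / 2) ^ 2) ^ 2) : ℝ) : ℂ) := by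
  have hb : 0 < Real.sqrt β := Real.sqrt_pos.mpr hβ
  have hb2 : Real.sqrt β ^ 2 = β := Real.sq_sqrt hβ.le
  have hs : (0:ℝ) < ς / 2 := by linarith
  have hae : (fun t : ℝ =>
      (((x - t) / (y ^ 2 + (x - t) ^ 2) : ℝ) : ℂ) *
        (((α : ℂ) - Complex.I * (γ : ℂ) * ((t : ℂ) + Complex.I * (ς : ℂ) / 2)) /
            ((β : ℂ) - ((t : ℂ) + Complex.I * (ς : ℂ) / 2) ^ 2) +
          ((α : ℂ) - Complex.I * (γ : ℂ) * (-(t : ℂ) + Complex.I * (ς : ℂ) / 2)) /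
            ((β : ℂ) - (-(t : ℂ) + Complex.I * (ς : ℂ) / 2) ^ 2)))
      =ᵐ[MeasureTheory.volume]
      (fun t : ℝ => ((fInt x y (ς / 2) (Real.sqrt β) α γ t : ℝ) : ℂ)) :=
    Filter.Eventually.of_forall fun t =>
      integrand_eq x y ς α γ β hy hς (Real.sqrt β) hb hb2 t
  have hoR : (∫ t : ℝ, ((fInt x y (ς / 2) (Real.sqrt β) α γ t : ℝ) : ℂ))
      = (((∫ t : ℝ, fInt x y (ς / 2) (Real.sqrt β) α γ t) : ℝ) : ℂ) := integral_ofReal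
  rw [MeasureTheory.integral_congr_ae hae, hoR, int_eq x α γ hy hs hb]
  have hV : Vval x y (ς / 2) (Real.sqrt β) α γ =
      x * (2 * α * (y + ς / 2) + γ * (x ^ 2 + (y + ς / 2) ^ 2 - β)) /
        (β ^ 2 + 2 * β * ((y + ς / 2) ^ 2 - x ^ 2) + (x ^ 2 + (y + ς / 2) ^ 2) ^ 2) := by
    unfold Vval
    rw [hb2]
  rw [hV]
  have hπ : (π : ℂ) ≠ 0 := Complex.ofReal_ne_zero.mpr Real.pi_ne_zero
  push_cast
  field_simp
end
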